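/- arXiv:2408.09643 — 12 statements merged into one kernel-verified Lean document; each statement's English description precedes it below -/
import Mathlib

section
/- Let $\mathcal{P} = (\mathcal{C}, \mathcal{A})$ be a palette, $k \geq 1$ an integer, and suppose $\mathcal{A}$ does not contain $k$ triples of the form $(a_1,b_1,a_2), (a_2,b_2,a_3), \dots, (a_k,b_k,a_{k+1})$ (with colors not necessarily distinct). Then $|\mathcal{A}| \leq (\frac{1}{2} - \frac{1}{2k})|\mathcal{C}|^3$. -/
/-!
Let `ℓ v` be the length of the longest chain starting at `v`; it takes at most `k` values and
drops strictly along every triple `(u, b, w) ∈ A`, so `|A| ≤ |C| · #{(u, w) | ℓ w < ℓ u}`.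
By Cauchy–Schwarz at least `|C|² / k` ordered pairs lie on a common level of `ℓ`, and the
remaining pairs split evenly between `ℓ w < ℓ u` and `ℓ u < ℓ w`.
-/

open Finset

section LevelCounting

variable {α β : Type*} [Fintype α] [LinearOrder β] (f : α → β)

theorem two_mul_card_filter_lt_add_card_filter_eq :
    2 * #{p : α × α | f p.2 < f p.1} + #{p : α × α | f p.1 = f p.2} = Fintype.card α ^ 2 := by
  have hswap : #{p : α × α | f p.2 < f p.1} = #{p : α × α | f p.1 < f p.2} :=
    card_nbij' Prod.swap Prod.swap (by simp [Set.MapsTo]) (by simp [Set.MapsTo])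
      (fun _ _ => rfl) (fun _ _ => rfl)
  rw [two_mul, hswap, sq, ← Fintype.card_prod, ← card_univ]
  nth_rw 1 [← hswap]
  rw [card_filter, card_filter, card_filter, ← sum_add_distrib, ← sum_add_distrib,
    card_eq_sum_ones]
  refine sum_congr rfl fun p _ => ?_
  split_ifs <;> grind

variable [Fintype β]

theorem card_filter_eq_eq_sum_sq :
    #{p : α × α | f p.1 = f p.2} = ∑ b, #{a | f a = b} ^ 2 := by
  rw [card_eq_sum_card_fiberwise (f := fun p => f p.1) (t := univ) fun _ _ => mem_univ _]
  refine sum_congr rfl fun b _ => ?_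
  rw [sq, ← card_product]
  congr 1
  ext ⟨u, w⟩
  simp only [mem_filter, mem_univ, true_and, mem_product]
  grind

theorem sq_card_le_card_mul_card_filter_eq :
    Fintype.card α ^ 2 ≤ Fintype.card β * #{p : α × α | f p.1 = f p.2} := by
  rw [card_filter_eq_eq_sum_sq, ← card_univ (α := α),
    card_eq_sum_card_fiberwise (f := f) (t := univ) fun _ _ => mem_univ _]
  exact sq_sum_le_card_mul_sum_sq

theorem card_filter_lt_le :
    (#{p : α × α | f p.2 < f p.1} : ℚ) ≤
      (1 / 2 - 1 / (2 * Fintype.card β)) * Fintype.card α ^ 2 := by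
  have hsplit := two_mul_card_filter_lt_add_card_filter_eq f
  have hcs := sq_card_le_card_mul_card_filter_eq f
  set k := Fintype.card β
  set n := Fintype.card α
  set lt := #{p : α × α | f p.2 < f p.1}
  set eq := #{p : α × α | f p.1 = f p.2}
  have hsplit' : 2 * (lt : ℚ) + eq = n ^ 2 := by exact_mod_cast hsplit
  rcases k.eq_zero_or_pos with hk | hk
  · simp only [hk, CharP.cast_eq_zero, mul_zero, div_zero, sub_zero]
    linarith [(eq.cast_nonneg : (0 : ℚ) ≤ eq)]
  · have hk' : (0 : ℚ) < k := by exact_mod_cast hk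
    have heq : (n : ℚ) ^ 2 / k ≤ eq := by
      rw [div_le_iff₀ hk', mul_comm]
      exact_mod_cast hcs
    rw [show (1 / 2 - 1 / (2 * k : ℚ)) * n ^ 2 = (n ^ 2 - n ^ 2 / k) / 2 by ring]
    linarith

end LevelCounting

theorem RelSeries.exists_grading_of_forall_length_ne {α : Type*} {r : SetRel α α} {k : ℕ}
    (h : ∀ p : RelSeries r, p.length ≠ k) :
    ∃ f : α → Fin k, ∀ ⦃u w⦄, (u, w) ∈ r → f w < f u := by
  classical
  let IsLength v j := ∃ p : RelSeries r, p.head = v ∧ p.length = j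
  let ℓ v := Nat.findGreatest (IsLength v) k
  have hℓ v : IsLength v (ℓ v) :=
    Nat.findGreatest_spec (P := IsLength v) (Nat.zero_le k) ⟨RelSeries.singleton r v, rfl, rfl⟩
  have hℓk v : ℓ v < k := by
    refine (Nat.findGreatest_le k).lt_of_ne fun hk => ?_
    obtain ⟨p, -, hp⟩ := hℓ v
    exact h p (hp.trans hk)
  refine ⟨fun v => ⟨ℓ v, hℓk v⟩, fun u w huw => ?_⟩
  obtain ⟨p, rfl, hp⟩ := hℓ w
  exact Nat.le_findGreatest (hℓk _) ⟨p.cons u huw, rfl, by simp [hp]⟩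

theorem Finset.card_le_card_mul_of_forall_mem {α β γ : Type*} [Fintype β]
    (A : Finset (α × β × γ)) (S : Finset (α × γ)) (hA : ∀ x ∈ A, (x.1, x.2.2) ∈ S) :
    #A ≤ #S * Fintype.card β := by
  rw [← card_univ, ← card_product]
  refine card_le_card_of_injOn (fun x => ((x.1, x.2.2), x.2.1)) (fun x hx => ?_) ?_
  · simpa using hA x hx
  · rintro ⟨a, b, c⟩ - ⟨a', b', c'⟩ - h
    simp_all

theorem stmt1_general {α : Type*} [Fintype α] (A : Finset (α × α × α)) (k : ℕ)
    (h : ¬ ∃ (a : Fin (k + 1) → α) (b : Fin k → α),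
        ∀ i : Fin k, (a i.castSucc, b i, a i.succ) ∈ A) :
    (A.card : ℚ) ≤ (1 / 2 - 1 / (2 * k)) * (Fintype.card α : ℚ) ^ 3 := by
  obtain ⟨f, hf⟩ := RelSeries.exists_grading_of_forall_length_ne
    (r := {x : α × α | ∃ b, (x.1, b, x.2) ∈ A}) (k := k) <| by
      rintro p rfl
      exact h ⟨p, fun i => (p.step i).choose, fun i => (p.step i).choose_spec⟩
  calc (#A : ℚ) ≤ #{p : α × α | f p.2 < f p.1} * Fintype.card α := by
        exact_mod_cast A.card_le_card_mul_of_forall_mem _ fun x hx => by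
          simpa using hf ⟨x.2.1, hx⟩
    _ ≤ (1 / 2 - 1 / (2 * Fintype.card (Fin k))) * Fintype.card α ^ 2 * Fintype.card α := by
        gcongr
        exact card_filter_lt_le f
    _ = (1 / 2 - 1 / (2 * k)) * Fintype.card α ^ 3 := by
        rw [Fintype.card_fin]
        ring

/-- If a palette `(C, A)` contains no chain of `k` triples
`(a₁,b₁,a₂), (a₂,b₂,a₃), …, (a_k,b_k,a_{k+1})`, then
`|A| ≤ (1/2 - 1/(2k))|C|³`. -/
theorem stmt1 {α : Type*} [Fintype α] (A : Finset (α × α × α)) (k : ℕ) (hk : 1 ≤ k)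
    (h : ¬ ∃ (a : Fin (k + 1) → α) (b : Fin k → α),
        ∀ i : Fin k, (a i.castSucc, b i, a i.succ) ∈ A) :
    (A.card : ℚ) ≤ (1 / 2 - 1 / (2 * k)) * (Fintype.card α : ℚ) ^ 3 :=
  stmt1_general A k h
end

section
/- Let $G$ be a finite directed graph (loops allowed) on vertex set $\mathcal{C}$ of size $n$ which contains no three edges of the form $\vec{ab}, \vec{ac}, \vec{bc}$ (vertices $a, b, c$ not necessarily distinct). Then $\sum_{c \in \mathcal{C}} d^-(c)^2 \leq n^3/4$, where $d^-(c)$ denotes the in-degree of $c$. -/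
/-!
Every edge `a → c` forces `d⁻(c) + d⁺(a) ≤ n`: an in-neighbour `b` of `c` that is also an
out-neighbour of `a` would give the forbidden edges `a → b`, `a → c`, `b → c`. Summing over all
edges, `∑ d⁻(c)² + ∑ d⁺(a)² ≤ n |E| = n ∑ d⁺(a)`, hence
`∑ d⁻(c)² ≤ ∑ d⁺(a) (n - d⁺(a)) ≤ n · n²/4`.
-/

open Finset

namespace DirectedEdges

variable {α : Type*} [DecidableEq α] (E : Finset (α × α))

def inDeg (c : α) : ℕ := #{p ∈ E | p.2 = c}

def outDeg (a : α) : ℕ := #{p ∈ E | p.1 = a}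

variable [Fintype α]

theorem sum_inDeg_sq : ∑ c, inDeg E c ^ 2 = ∑ p ∈ E, inDeg E p.2 := by
  rw [← sum_fiberwise' E Prod.snd]
  simp only [sum_const, smul_eq_mul, inDeg, sq]

theorem sum_outDeg_sq : ∑ a, outDeg E a ^ 2 = ∑ p ∈ E, outDeg E p.1 := by
  rw [← sum_fiberwise' E Prod.fst]
  simp only [sum_const, smul_eq_mul, outDeg, sq]

theorem card_eq_sum_outDeg : #E = ∑ a, outDeg E a :=
  card_eq_sum_card_fiberwise fun _ _ => mem_coe.2 (mem_univ _)

theorem inDeg_eq_card (c : α) : inDeg E c = #{b | (b, c) ∈ E} := by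
  refine card_nbij' Prod.fst (·, c) ?_ (fun b hb => by simpa using hb) ?_ (fun _ _ => rfl)
  all_goals rintro ⟨b, _⟩ hp; obtain ⟨hb, rfl⟩ := mem_filter.1 hp
  exacts [by simpa using hb, rfl]

theorem outDeg_eq_card (a : α) : outDeg E a = #{b | (a, b) ∈ E} := by
  refine card_nbij' Prod.snd (a, ·) ?_ (fun b hb => by simpa using hb) ?_ (fun _ _ => rfl)
  all_goals rintro ⟨_, b⟩ hp; obtain ⟨hb, rfl⟩ := mem_filter.1 hp
  exacts [by simpa using hb, rfl]

variable {E}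

theorem inDeg_add_outDeg_le (hE : ¬ ∃ a b c : α, (a, b) ∈ E ∧ (a, c) ∈ E ∧ (b, c) ∈ E)
    {a c : α} (hac : (a, c) ∈ E) : inDeg E c + outDeg E a ≤ Fintype.card α := by
  have hdisj : Disjoint ({b | (b, c) ∈ E} : Finset α) ({b | (a, b) ∈ E} : Finset α) :=
    disjoint_filter.2 fun b _ hbc hab => hE ⟨a, b, c, hab, hac, hbc⟩
  rw [inDeg_eq_card, outDeg_eq_card, ← card_union_of_disjoint hdisj]
  exact card_le_univ _

theorem sum_inDeg_sq_add_sum_outDeg_sq_le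
    (hE : ¬ ∃ a b c : α, (a, b) ∈ E ∧ (a, c) ∈ E ∧ (b, c) ∈ E) :
    ∑ c, inDeg E c ^ 2 + ∑ a, outDeg E a ^ 2 ≤ Fintype.card α * #E := by
  rw [sum_inDeg_sq, sum_outDeg_sq, ← sum_add_distrib, mul_comm, ← smul_eq_mul, ← sum_const]
  exact sum_le_sum fun p hp => inDeg_add_outDeg_le hE hp

end DirectedEdges

open DirectedEdges in
/-- If a finite directed graph (loops allowed) contains no three edges of the form
`a→b`, `a→c`, `b→c` (vertices not necessarily distinct), then the sum of the
squares of the in-degrees is at most `n³/4`. -/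
theorem stmt3 {α : Type*} [Fintype α] [DecidableEq α] (E : Finset (α × α))
    (h : ¬ ∃ a b c : α, (a, b) ∈ E ∧ (a, c) ∈ E ∧ (b, c) ∈ E) :
    (∑ c : α, ((E.filter (fun p => p.2 = c)).card : ℚ) ^ 2)
      ≤ (Fintype.card α : ℚ) ^ 3 / 4 := by
  have hsum : ∑ c, (inDeg E c : ℚ) ^ 2 + ∑ a, (outDeg E a : ℚ) ^ 2
      ≤ Fintype.card α * ∑ a, (outDeg E a : ℚ) := by
    have := sum_inDeg_sq_add_sum_outDeg_sq_le h
    rw [card_eq_sum_outDeg] at this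
    exact_mod_cast this
  set n : ℚ := (Fintype.card α : ℚ)
  have hterm (a : α) : (outDeg E a : ℚ) * (n - outDeg E a) ≤ n ^ 2 / 4 := by
    nlinarith [sq_nonneg (n - 2 * outDeg E a)]
  calc ∑ c, (inDeg E c : ℚ) ^ 2 ≤ ∑ a, (outDeg E a : ℚ) * (n - outDeg E a) := by
        simp only [mul_sub, sum_sub_distrib, ← mul_sum, mul_comm _ n, ← sq]
        linarith
    _ ≤ ∑ _a : α, n ^ 2 / 4 := sum_le_sum fun a _ => hterm a
    _ = n ^ 3 / 4 := by simp only [sum_const, card_univ, nsmul_eq_mul]; ring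
end

section
/- Let $K_4^{(3)-}$ be the 3-uniform hypergraph on 4 vertices with exactly 3 edges (obtained from the complete 3-graph on 4 vertices by deleting one edge). Let $\mathcal{Q}$ be the palette with color set $\{1,2\}$ and admissible triples $\{(1,2,1), (2,1,2)\}$. Then $K_4^{(3)-}$ does not admit $\mathcal{Q}$. -/
/-- A 3-graph `E` on vertex set `V` admits a palette with color set `C` and
admissible triples `A ⊆ C³` if there is a linear order on `V` (given by an
injection into `ℕ`) and a symmetric coloring `φ` of pairs such that every edge
`{u,v,w}` with `u ≺ v ≺ w` satisfies `(φ u v, φ u w, φ v w) ∈ A`. -/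
def Admits {V C : Type*} [DecidableEq V] (E : Set (Finset V)) (A : Set (C × C × C)) : Prop :=
  ∃ (f : V → ℕ) (φ : V → V → C), Function.Injective f ∧ (∀ u v, φ u v = φ v u) ∧
    ∀ u v w, ({u, v, w} : Finset V) ∈ E → f u < f v → f v < f w →
      (φ u v, φ u w, φ v w) ∈ A

/-- `K₄⁽³⁾⁻`: the 3-uniform hypergraph on 4 vertices with exactly 3 edges. -/
def K43minus : Set (Finset (Fin 4)) := {{0, 1, 2}, {0, 1, 3}, {0, 2, 3}}

/-!
If `𝒬` is admitted, every edge `u ≺ v ≺ w` has `φ uv = φ vw ≠ φ uw`; so the two pairs of an edge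
through a vertex `z` get the same colour exactly when `z` is the middle vertex of the edge.
All three edges of `K₄⁽³⁾⁻` contain `0`, so among the three pairs of `{1, 2, 3}`, the pairs `x, y`
with `φ 0x = φ 0y` are those separated by `0` in the order. With two colours an odd number of the
pairs have equal colours, but an even number of them are separated by `0`.
-/

lemma eq_and_ne_of_mem_palette {a b c : Fin 2}
    (h : (a, b, c) ∈ ({(0, 1, 0), (1, 0, 1)} : Set (Fin 2 × Fin 2 × Fin 2))) :
    a = c ∧ a ≠ b := by
  simp only [Set.mem_insert_iff, Set.mem_singleton_iff, Prod.mk.injEq] at h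
  rcases h with ⟨rfl, rfl, rfl⟩ | ⟨rfl, rfl, rfl⟩ <;> decide

lemma Fin.two_eq_iff_eq_iff_eq (a b c : Fin 2) : a = b ↔ (a = c ↔ b = c) := by
  revert a b c; decide

lemma spoke_colour_eq_iff_between {V C : Type*} [DecidableEq V] {E : Set (Finset V)}
    {f : V → ℕ} {φ : V → V → C} (hsym : ∀ u v, φ u v = φ v u)
    (hQ : ∀ u v w, ({u, v, w} : Finset V) ∈ E → f u < f v → f v < f w →
      φ u v = φ v w ∧ φ u v ≠ φ u w)
    {z x y : V} (hE : ({z, x, y} : Finset V) ∈ E)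
    (hzx : f z ≠ f x) (hzy : f z ≠ f y) (hxy : f x ≠ f y) :
    φ z x = φ z y ↔ ¬ (f x < f z ↔ f y < f z) := by
  wlog hlt : f x < f y generalizing x y
  · have hE' : ({z, y, x} : Finset V) ∈ E := by rwa [Finset.pair_comm]
    rw [eq_comm, this hE' hzy hzx hxy.symm (hxy.symm.lt_of_le (not_lt.mp hlt))]
    tauto
  have mem : ∀ {u v w : V}, ({u, v, w} : Finset V) = {z, x, y} → ({u, v, w} : Finset V) ∈ E :=
    fun h => h ▸ hE
  rcases hzx.lt_or_gt with hz | hz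
  · have := (hQ z x y hE hz hlt).2
    simp only [this, false_iff, hz.not_gt, (hz.trans hlt).not_gt]
    tauto
  rcases hzy.lt_or_gt with hz' | hz'
  · have := (hQ x z y (mem (by ext; simp only [Finset.mem_insert, Finset.mem_singleton]; tauto))
      hz hz').1
    simp only [hsym z x, this, hz, hz'.not_gt]
    tauto
  · obtain ⟨heq, hne⟩ :=
      hQ x y z (mem (by ext; simp only [Finset.mem_insert, Finset.mem_singleton]; tauto)) hlt hz'
    rw [hsym z x, hsym z y, ← heq]
    simp only [hz, hz']
    tauto

/-- `K₄⁽³⁾⁻` does not admit the two-color palette with admissible triples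
`{(1,2,1), (2,1,2)}` (colors written as `0, 1 : Fin 2`). -/
theorem stmt4 :
    ¬ Admits K43minus
      ({((0 : Fin 2), (1 : Fin 2), (0 : Fin 2)), (1, 0, 1)} :
        Set (Fin 2 × Fin 2 × Fin 2)) := by
  rintro ⟨f, φ, hf, hsym, hA⟩
  have hQ : ∀ u v w, ({u, v, w} : Finset (Fin 4)) ∈ K43minus → f u < f v → f v < f w →
      φ u v = φ v w ∧ φ u v ≠ φ u w := fun u v w hE huv hvw =>
    eq_and_ne_of_mem_palette (hA u v w hE huv hvw)
  have spoke : ∀ x y : Fin 4, ({0, x, y} : Finset (Fin 4)) ∈ K43minus → 0 ≠ x → 0 ≠ y → x ≠ y →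
      (φ 0 x = φ 0 y ↔ ¬ (f x < f 0 ↔ f y < f 0)) := fun x y hE h0x h0y hxy =>
    spoke_colour_eq_iff_between hsym hQ hE (hf.ne h0x) (hf.ne h0y) (hf.ne hxy)
  have s12 := spoke 1 2 (by simp [K43minus]) (by decide) (by decide) (by decide)
  have s13 := spoke 1 3 (by simp [K43minus]) (by decide) (by decide) (by decide)
  have s23 := spoke 2 3 (by simp [K43minus]) (by decide) (by decide) (by decide)
  have := Fin.two_eq_iff_eq_iff_eq (φ 0 1) (φ 0 2) (φ 0 3)
  tauto
end

section
/- Let $\mathcal{P} = (\mathcal{C}, \mathcal{A})$ be a palette such that $K_4^{(3)-}$ does not admit $\mathcal{P}$. Then $|\mathcal{A}| \leq |\mathcal{C}|^3/4$, i.e., $d(\mathcal{P}) \leq 1/4$. -/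
/-! For a colour `b` let `L b` be the set of `a` with `(a, b, c) ∈ A` for some `c`, and `R b` the
set of `c` with `(a, b, c) ∈ A` for some `a`; then `|A| ≤ ∑ b, |L b| |R b|`. If `b ∈ L c`, then
`L b` and `L c` are disjoint: a common `a` gives colours for the pairs `01, 02, 03, 12, 13, 23`
of an ordered copy of `K₄⁽³⁾⁻`. So `|L b| + |L c| ≤ |C|`, and looking at the largest `|L c| = u`,
at least `u` of the values `|L b|` are at most `|C| - u`; this forces `4 ∑ |L b|² ≤ |C|³`.
Reversing all triples (and the vertex order) exchanges `L` and `R`, so `4 ∑ |R b|² ≤ |C|³` as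
well, and `2 |L b| |R b| ≤ |L b|² + |R b|²` concludes. -/

open Finset

theorem four_mul_le_cube {ℓ m u x : ℕ} (hxu : x ≤ u) (huℓ : u ≤ ℓ) (hsum : ℓ + m = u + x) :
    4 * (ℓ * x ^ 2 + m * u ^ 2) ≤ (u + x) ^ 3 := by
  obtain ⟨d, rfl⟩ := Nat.exists_eq_add_of_le huℓ
  obtain ⟨e, rfl⟩ := Nat.exists_eq_add_of_le hxu
  obtain rfl : x = m + d := by omega
  nlinarith [Nat.zero_le (d * e * (2 * (m + d) + e)), Nat.zero_le (e * e * (2 * (m + d) + e))]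

theorem four_mul_sum_sq_le_cube {α : Type*} [Fintype α] (s : α → ℕ)
    (hs : ∀ z, s z ≤ #{y | s y + s z ≤ Fintype.card α}) :
    4 * ∑ z, s z ^ 2 ≤ Fintype.card α ^ 3 := by
  classical
  set n := Fintype.card α
  cases isEmpty_or_nonempty α
  · simp
  obtain ⟨m, hm⟩ := Finite.exists_max s
  set u := s m
  set L : Finset α := {y | s y + u ≤ n}
  have huL : u ≤ #L := hs m
  have hLn : #L ≤ n := card_le_univ L
  by_cases hu : 2 * u ≤ n
  · calc 4 * ∑ z, s z ^ 2 = ∑ z, (2 * s z) ^ 2 := by rw [mul_sum]; ring_nf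
      _ ≤ ∑ _z : α, n ^ 2 := by gcongr with z; exact (Nat.mul_le_mul_left 2 (hm z)).trans hu
      _ = n ^ 3 := by rw [sum_const, card_univ, smul_eq_mul]; ring
  · -- at least `u` values are `≤ n - u`, and all are `≤ u`
    calc 4 * ∑ z, s z ^ 2 = 4 * (∑ z ∈ L, s z ^ 2 + ∑ z ∈ Lᶜ, s z ^ 2) := by
          rw [sum_add_sum_compl]
      _ ≤ 4 * (#L * (n - u) ^ 2 + #Lᶜ * u ^ 2) := by
          gcongr
          · refine sum_le_card_nsmul _ _ _ fun z hz => ?_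
            have := (mem_filter.mp hz).2
            gcongr; omega
          · exact sum_le_card_nsmul _ _ _ fun z _ => Nat.pow_le_pow_left (hm z) 2
      _ ≤ (u + (n - u)) ^ 3 := four_mul_le_cube (by omega) huL (by rw [card_compl]; omega)
      _ = n ^ 3 := by congr 1; omega

theorem four_mul_sum_mul_le {α : Type*} (S : Finset α) (s t : α → ℕ) {N : ℕ}
    (hs : 4 * ∑ i ∈ S, s i ^ 2 ≤ N) (ht : 4 * ∑ i ∈ S, t i ^ 2 ≤ N) :
    4 * ∑ i ∈ S, s i * t i ≤ N := by
  have : 2 * ∑ i ∈ S, s i * t i ≤ ∑ i ∈ S, s i ^ 2 + ∑ i ∈ S, t i ^ 2 := by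
    rw [mul_sum, ← sum_add_distrib]
    gcongr with i
    rw [← mul_assoc]
    exact two_mul_le_add_sq _ _
  omega

theorem admits_K43minus_of_mem {γ : Type*} {A : Set (γ × γ × γ)} {a b c w₁ w₂ w₃ : γ}
    (h₁ : (a, b, w₁) ∈ A) (h₂ : (a, c, w₂) ∈ A) (h₃ : (b, c, w₃) ∈ A) :
    Admits K43minus A := by
  -- vertex `0` lies in all three edges and comes first; its pairs are coloured `a, b, c`
  refine ⟨Fin.val, ![![a, a, b, c], ![a, a, w₁, w₂], ![b, w₁, a, w₃], ![c, w₂, w₃, a]],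
    Fin.val_injective, fun u v => by fin_cases u <;> fin_cases v <;> rfl, ?_⟩
  intro u v w hE huv hvw
  simp only [K43minus, Set.mem_insert_iff, Set.mem_singleton_iff] at hE
  fin_cases u <;> fin_cases v <;> fin_cases w <;> first | exact absurd hE (by decide) | simp_all

def tripleReverse {γ : Type*} (t : γ × γ × γ) : γ × γ × γ := (t.2.2, t.2.1, t.1)

theorem tripleReverse_involutive {γ : Type*} : Function.Involutive (@tripleReverse γ) :=
  fun _ => rfl

theorem Admits.preimage_tripleReverse {V C : Type*} [Fintype V] [DecidableEq V]
    {E : Set (Finset V)} {A : Set (C × C × C)} (h : Admits E A) :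
    Admits E (tripleReverse ⁻¹' A) := by
  obtain ⟨f, φ, hf, hφ, hA⟩ := h
  have hle : ∀ v, f v ≤ univ.sup f := fun v => le_sup (mem_univ v)
  refine ⟨fun v => univ.sup f - f v, φ, fun u v huv => hf ?_, hφ, fun u v w hE huv hvw => ?_⟩
  · have := hle u; have := hle v; simp only at huv; omega
  · have hE' : ({w, v, u} : Finset V) ∈ E := by
      convert hE using 1; ext; simp only [mem_insert, mem_singleton]; tauto
    have := hA w v u hE' (by simp only at hvw; have := hle v; omega)
      (by simp only at huv; have := hle u; omega)
    rwa [hφ w v, hφ w u, hφ v u] at this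

theorem Admits.of_image_tripleReverse {V C : Type*} [Fintype V] [DecidableEq V] [DecidableEq C]
    {E : Set (Finset V)} {A : Finset (C × C × C)}
    (h : Admits E (↑(A.image tripleReverse) : Set (C × C × C))) :
    Admits E (A : Set (C × C × C)) := by
  simpa only [coe_image, tripleReverse_involutive.injective.preimage_image] using
    h.preimage_tripleReverse

section Colors

variable {γ : Type*} [DecidableEq γ]

def leftColors (A : Finset (γ × γ × γ)) (b : γ) : Finset γ :=
  {t ∈ A | t.2.1 = b}.image Prod.fst

def rightColors (A : Finset (γ × γ × γ)) (b : γ) : Finset γ :=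
  {t ∈ A | t.2.1 = b}.image (·.2.2)

theorem mem_leftColors {A : Finset (γ × γ × γ)} {a b : γ} :
    a ∈ leftColors A b ↔ ∃ c, (a, b, c) ∈ A := by
  simp [leftColors]

theorem mem_rightColors {A : Finset (γ × γ × γ)} {b c : γ} :
    c ∈ rightColors A b ↔ ∃ a, (a, b, c) ∈ A := by
  simp [rightColors]

theorem rightColors_eq_leftColors_image (A : Finset (γ × γ × γ)) (b : γ) :
    rightColors A b = leftColors (A.image tripleReverse) b := by
  ext c
  simp only [mem_rightColors, mem_leftColors, mem_image, tripleReverse, Prod.ext_iff]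
  constructor
  · rintro ⟨a, ha⟩; exact ⟨a, _, ha, rfl, rfl, rfl⟩
  · rintro ⟨a, ⟨a', b', c'⟩, ha, rfl, rfl, rfl⟩; exact ⟨a', ha⟩

theorem card_le_sum_card_leftColors_mul_card_rightColors [Fintype γ]
    (A : Finset (γ × γ × γ)) :
    #A ≤ ∑ b, #(leftColors A b) * #(rightColors A b) := by
  rw [card_eq_sum_card_fiberwise (f := fun t => t.2.1) (t := univ) (fun _ _ => mem_univ _)]
  gcongr with b
  calc #{t ∈ A | t.2.1 = b} ≤ #(leftColors A b ×ˢ {b} ×ˢ rightColors A b) := by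
        refine card_le_card fun t ht => ?_
        obtain ⟨htA, rfl⟩ := mem_filter.mp ht
        simp only [mem_product, mem_singleton, mem_leftColors, mem_rightColors]
        exact ⟨⟨_, htA⟩, trivial, _, htA⟩
    _ = #(leftColors A b) * #(rightColors A b) := by simp [card_product]

theorem disjoint_leftColors {A : Finset (γ × γ × γ)}
    (h : ¬ Admits K43minus (A : Set (γ × γ × γ)))
    {b c : γ} (hbc : b ∈ leftColors A c) : Disjoint (leftColors A b) (leftColors A c) := by
  refine disjoint_left.mpr fun a hab hac => h ?_
  obtain ⟨_, h₁⟩ := mem_leftColors.mp hab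
  obtain ⟨_, h₂⟩ := mem_leftColors.mp hac
  obtain ⟨_, h₃⟩ := mem_leftColors.mp hbc
  exact admits_K43minus_of_mem (mem_coe.mpr h₁) (mem_coe.mpr h₂) (mem_coe.mpr h₃)

theorem card_leftColors_le_card_filter [Fintype γ] {A : Finset (γ × γ × γ)}
    (h : ¬ Admits K43minus (A : Set (γ × γ × γ))) (c : γ) :
    #(leftColors A c) ≤ #{b | #(leftColors A b) + #(leftColors A c) ≤ Fintype.card γ} := by
  refine card_le_card fun b hbc => mem_filter.mpr ⟨mem_univ b, ?_⟩
  rw [← card_union_of_disjoint (disjoint_leftColors h hbc)]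
  exact card_le_univ _

theorem four_mul_sum_sq_card_leftColors_le [Fintype γ] {A : Finset (γ × γ × γ)}
    (h : ¬ Admits K43minus (A : Set (γ × γ × γ))) :
    4 * ∑ b, #(leftColors A b) ^ 2 ≤ Fintype.card γ ^ 3 :=
  four_mul_sum_sq_le_cube _ (card_leftColors_le_card_filter h)

end Colors

/-- If `K₄⁽³⁾⁻` does not admit a palette `(C, A)`, then `|A| ≤ |C|³/4`. -/
theorem stmt5 {γ : Type*} [Fintype γ] (A : Finset (γ × γ × γ))
    (h : ¬ Admits K43minus (↑A : Set (γ × γ × γ))) :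
    (A.card : ℚ) ≤ (Fintype.card γ : ℚ) ^ 3 / 4 := by
  classical
  have hrev := mt Admits.of_image_tripleReverse h
  have key : 4 * #A ≤ Fintype.card γ ^ 3 := by
    refine (Nat.mul_le_mul_left 4 (card_le_sum_card_leftColors_mul_card_rightColors A)).trans ?_
    simp only [rightColors_eq_leftColors_image]
    exact four_mul_sum_mul_le _ _ _ (four_mul_sum_sq_card_leftColors_le h)
      (four_mul_sum_sq_card_leftColors_le hrev)
  rw [le_div_iff₀ (by norm_num)]
  exact_mod_cast (mul_comm _ _).trans_le key
end

section
/- For every $k \geq 2$, the 3-graph $F_k$ constructed as follows does not admit the palette $\mathcal{P}_k = ([k], \{(x,y,z) : x < z\})$: take any linear $(k+2)$-uniform hypergraph $H$ on $[n]$ such that for every permutation $\sigma$ of $[n]$ some edge of $H$ is monotone under $\sigma$; for each edge of $H$ with vertices $v_1 < v_2 < \cdots < v_{k+2}$, place 3-edges $v_i v_{i+1} v_{i+2}$ for $i \in [k]$. -/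
/-- The 3-graph `F_k` obtained from a `(k+2)`-uniform hypergraph `H` on `[n]`:
for every edge of `H` with vertices `v₁ < v₂ < ⋯ < v_{k+2}`, place the 3-edges
`vᵢ v_{i+1} v_{i+2}` for `i ∈ [k]`, i.e. all consecutive triples of an edge. -/
def Fk {n : ℕ} (H : Finset (Finset (Fin n))) : Set (Finset (Fin n)) :=
  {t | ∃ e ∈ H, ∃ u v w : Fin n, t = {u, v, w} ∧ u < v ∧ v < w ∧
    u ∈ e ∧ v ∈ e ∧ w ∈ e ∧
    (∀ x ∈ e, ¬(u < x ∧ x < v)) ∧ (∀ x ∈ e, ¬(v < x ∧ x < w))}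

theorem Fin.exists_perm_lt_iff_lt_of_injective {n : ℕ} {α : Type*} [LinearOrder α]
    {f : Fin n → α} (hf : Function.Injective f) :
    ∃ σ : Equiv.Perm (Fin n), ∀ u v, σ u < σ v ↔ f u < f v := by
  have hsort : StrictMono (f ∘ Tuple.sort f) :=
    (Tuple.monotone_sort f).strictMono_of_injective (hf.comp (Equiv.injective _))
  refine ⟨(Tuple.sort f)⁻¹, fun u v => ?_⟩
  simpa using (hsort.lt_iff_lt (a := (Tuple.sort f)⁻¹ u) (b := (Tuple.sort f)⁻¹ v)).symm

theorem Finset.not_lt_orderEmbOfFin_castSucc_lt_succ {α : Type*} [LinearOrder α]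
    {s : Finset α} {m : ℕ} (h : s.card = m + 1) (a : Fin m) {x : α} (hx : x ∈ s) :
    ¬(s.orderEmbOfFin h a.castSucc < x ∧ x < s.orderEmbOfFin h a.succ) := by
  rintro ⟨h₁, h₂⟩
  obtain ⟨j, rfl⟩ : x ∈ Set.range (s.orderEmbOfFin h) := by
    rwa [Finset.range_orderEmbOfFin]
  rw [OrderEmbedding.lt_iff_lt] at h₁ h₂
  exact absurd (Fin.castSucc_lt_iff_succ_le.mp h₁) (not_le.mpr h₂)

section TightPath

variable {V : Type*} [DecidableEq V]

def IsTightPath (E : Set (Finset V)) {m : ℕ} (v : Fin (m + 2) → V) : Prop :=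
  ∀ i : Fin m, ({v i.castSucc.castSucc, v i.castSucc.succ, v i.succ.succ} : Finset V) ∈ E

variable {E : Set (Finset V)} {m : ℕ} {v : Fin (m + 2) → V}

theorem IsTightPath.rev (hv : IsTightPath E v) : IsTightPath E (v ∘ Fin.rev) := by
  intro i
  convert hv i.rev using 1
  simp only [Function.comp_apply, Fin.rev_castSucc, Fin.rev_succ, Fin.succ_castSucc]
  ext
  simp only [Finset.mem_insert, Finset.mem_singleton]
  tauto

theorem IsTightPath.not_strictMono_comp (hv : IsTightPath E v) {f : V → ℕ} {φ : V → V → Fin m}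
    (hA : ∀ u v w, ({u, v, w} : Finset V) ∈ E → f u < f v → f v < f w →
      (φ u v, φ u w, φ v w) ∈ {t : Fin m × Fin m × Fin m | t.1 < t.2.2}) :
    ¬ StrictMono (f ∘ v) := by
  intro hf
  have hcolor : StrictMono fun i : Fin (m + 1) => φ (v i.castSucc) (v i.succ) := by
    refine Fin.strictMono_iff_lt_succ.mpr fun i => ?_
    exact hA _ _ _ (hv i) (hf (by simp [Fin.lt_def])) (hf (by simp [Fin.lt_def]))
  simpa using Fin.le_of_injective _ hcolor.injective

end TightPath

theorem isTightPath_Fk_orderEmbOfFin {n k : ℕ} {H : Finset (Finset (Fin n))} {e : Finset (Fin n)}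
    (he : e ∈ H) (hcard : e.card = k + 2) : IsTightPath (Fk H) (e.orderEmbOfFin hcard) := by
  intro i
  refine ⟨e, he, _, _, _, rfl, (e.orderEmbOfFin hcard).strictMono (by simp [Fin.lt_def]),
    (e.orderEmbOfFin hcard).strictMono (by simp [Fin.lt_def]), e.orderEmbOfFin_mem _ _,
    e.orderEmbOfFin_mem _ _, e.orderEmbOfFin_mem _ _, fun x hx => ?_, fun x hx => ?_⟩
  · simpa using e.not_lt_orderEmbOfFin_castSucc_lt_succ hcard i.castSucc hx
  · simpa using e.not_lt_orderEmbOfFin_castSucc_lt_succ hcard i.succ hx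

theorem stmt9_general (k : ℕ) (n : ℕ) (H : Finset (Finset (Fin n)))
    (huni : ∀ e ∈ H, e.card = k + 2)
    (hmono : ∀ σ : Equiv.Perm (Fin n), ∃ e ∈ H,
      StrictMonoOn σ (↑e : Set (Fin n)) ∨ StrictAntiOn σ (↑e : Set (Fin n))) :
    ¬ Admits (Fk H) {t : Fin k × Fin k × Fin k | t.1 < t.2.2} := by
  rintro ⟨f, φ, hf, -, hA⟩
  obtain ⟨σ, hσ⟩ := Fin.exists_perm_lt_iff_lt_of_injective hf
  obtain ⟨e, he, hσe⟩ := hmono σ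
  set v := e.orderEmbOfFin (huni e he)
  have hpath : IsTightPath (Fk H) v := isTightPath_Fk_orderEmbOfFin he _
  have hmem : ∀ i, v i ∈ (e : Set (Fin n)) := e.orderEmbOfFin_mem _
  rcases hσe with hσmono | hσanti
  · exact hpath.not_strictMono_comp hA fun i j hij =>
      (hσ _ _).1 (hσmono (hmem i) (hmem j) (v.strictMono hij))
  · exact hpath.rev.not_strictMono_comp hA fun i j hij =>
      (hσ _ _).1 (hσanti (hmem _) (hmem _) (v.strictMono (Fin.rev_lt_rev.mpr hij)))

/-- If `H` is a linear `(k+2)`-uniform hypergraph on `[n]` such that every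
permutation of `[n]` is monotone on some edge of `H`, then the 3-graph `F_k` does
not admit the palette `P_k = ([k], {(x,y,z) : x < z})`. -/
theorem stmt9 (k : ℕ) (hk : 2 ≤ k) (n : ℕ) (H : Finset (Finset (Fin n)))
    (huni : ∀ e ∈ H, e.card = k + 2)
    (hlin : ∀ e ∈ H, ∀ f ∈ H, e ≠ f → (e ∩ f).card ≤ 1)
    (hmono : ∀ σ : Equiv.Perm (Fin n), ∃ e ∈ H,
      StrictMonoOn σ (↑e : Set (Fin n)) ∨ StrictAntiOn σ (↑e : Set (Fin n))) :
    ¬ Admits (Fk H) {t : Fin k × Fin k × Fin k | t.1 < t.2.2} :=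
  stmt9_general k n H huni hmono
end

section
/- For every $k \geq 2$, the 3-graph $F_k$ constructed as follows admits every palette $\mathcal{P} = (\mathcal{C}, \mathcal{A})$ of density $d(\mathcal{P}) > \frac{1}{2} - \frac{1}{2k}$: take any linear $(k+2)$-uniform hypergraph $H$ on $[n]$, and for each edge of $H$ with vertices $v_1 < v_2 < \cdots < v_{k+2}$, place 3-edges $v_i v_{i+1} v_{i+2}$ for $i \in [k]$. -/
/-!
A palette of density greater than `1/2 - 1/(2k)` contains a chain `(aᵢ, bᵢ, aᵢ₊₁)`, `i < k`.
Otherwise the digraph with an arc `x → y` for every `(x, c, y) ∈ A` has no walk of length `k`,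
so the length `r` of the longest walk starting at a vertex takes fewer than `k` values and drops
along every triple. Hence `|A| ≤ |C| · #{(x, y) | r y < r x}`, and by Cauchy–Schwarz over the `k`
level sets of `r` this is at most `(1/2 - 1/(2k)) |C|³`.

Given the chain, order the vertices naturally and colour a pair `u < v` inside an edge `e` of `H`
(unique by linearity) by `aᵢ` if `v` directly follows `u` in `e` and by `bᵢ` otherwise, where `i`
is the position of `u` in `e`. The consecutive triple of `e` starting at position `i` then
receives exactly `(aᵢ, bᵢ, aᵢ₊₁)`.
-/

open Finset

section Chains

variable {γ : Type*}

theorem exists_rank_of_not_exists_walk {R : γ → γ → Prop} {k : ℕ}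
    (h : ¬ ∃ a : ℕ → γ, ∀ i < k, R (a i) (a (i + 1))) :
    ∃ r : γ → ℕ, (∀ v, r v < k) ∧ ∀ x y, R x y → r y < r x := by
  classical
  let HasWalk (v : γ) (ℓ : ℕ) : Prop := ∃ a : ℕ → γ, a 0 = v ∧ ∀ i < ℓ, R (a i) (a (i + 1))
  have hwalk_cons {x y : γ} {ℓ : ℕ} (hxy : R x y) : HasWalk y ℓ → HasWalk x (ℓ + 1) := by
    rintro ⟨a, rfl, ha⟩
    refine ⟨fun | 0 => x | i + 1 => a i, rfl, ?_⟩
    rintro (_ | i) hi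
    exacts [hxy, ha i (by omega)]
  let r (v : γ) : ℕ := Nat.findGreatest (HasWalk v) k
  have hr_walk (v : γ) : HasWalk v (r v) :=
    Nat.findGreatest_spec (Nat.zero_le k) ⟨fun _ => v, rfl, by simp⟩
  have hr_lt (v : γ) : r v < k := by
    refine (Nat.findGreatest_le k).lt_of_ne fun heq => h ?_
    obtain ⟨a, -, ha⟩ := hr_walk v
    exact ⟨a, heq ▸ ha⟩
  exact ⟨r, hr_lt, fun x y hxy => Nat.le_findGreatest (hr_lt y) (hwalk_cons hxy (hr_walk y))⟩

variable [Fintype γ]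

theorem card_filter_rank_gt_eq_card_filter_rank_lt (r : γ → ℕ) :
    #{p : γ × γ | r p.2 < r p.1} = #{p : γ × γ | r p.1 < r p.2} :=
  card_nbij' Prod.swap Prod.swap (by simp [Set.MapsTo]) (by simp [Set.MapsTo])
    (fun p _ => p.swap_swap) fun p _ => p.swap_swap

theorem sq_card_le_mul_card_filter_rank_eq {r : γ → ℕ} {k : ℕ} (hr : ∀ v, r v < k) :
    Fintype.card γ ^ 2 ≤ k * #{p : γ × γ | r p.1 = r p.2} := by
  let level (i : ℕ) : Finset γ := {v | r v = i}
  have hcard : Fintype.card γ = ∑ i ∈ range k, #(level i) :=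
    card_eq_sum_card_fiberwise fun v _ => mem_range.2 (hr v)
  have hpairs : #{p : γ × γ | r p.1 = r p.2} = ∑ i ∈ range k, #(level i) ^ 2 := by
    rw [card_eq_sum_card_fiberwise (f := fun p : γ × γ => r p.1) fun p _ => mem_range.2 (hr p.1)]
    refine sum_congr rfl fun i _ => ?_
    rw [sq, ← card_product]
    congr 1
    ext ⟨x, y⟩
    simp only [mem_filter, mem_univ, true_and, mem_product, level]
    omega
  rw [hcard, hpairs]
  simpa using sq_sum_le_card_mul_sum_sq (s := range k) (f := fun i => #(level i))

theorem card_filter_rank_gt_le {r : γ → ℕ} {k : ℕ} (hr : ∀ v, r v < k) :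
    k * (2 * #{p : γ × γ | r p.2 < r p.1}) + Fintype.card γ ^ 2 ≤ k * Fintype.card γ ^ 2 := by
  have htri (p : γ × γ) : ((if r p.2 < r p.1 then 1 else 0) + (if r p.1 < r p.2 then 1 else 0)
      + if r p.1 = r p.2 then 1 else 0 : ℕ) = 1 := by
    split_ifs <;> omega
  have hsplit : #{p : γ × γ | r p.2 < r p.1} + #{p : γ × γ | r p.1 < r p.2}
      + #{p : γ × γ | r p.1 = r p.2} = Fintype.card γ ^ 2 := by
    simp only [card_filter, ← sum_add_distrib, htri, sum_const, card_univ, Fintype.card_prod, sq,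
      smul_eq_mul, mul_one]
  have := sq_card_le_mul_card_filter_rank_eq hr
  rw [← card_filter_rank_gt_eq_card_filter_rank_lt] at hsplit
  nlinarith

theorem card_le_mul_card_filter_rank_gt {A : Finset (γ × γ × γ)} {r : γ → ℕ}
    (hA : ∀ t ∈ A, r t.2.2 < r t.1) :
    #A ≤ Fintype.card γ * #{p : γ × γ | r p.2 < r p.1} := by
  rw [← card_univ, ← card_product]
  refine card_le_card_of_injOn (fun t => (t.2.1, t.1, t.2.2)) (fun t ht => ?_) fun t _ t' _ h => ?_
  · simpa using hA t ht
  · simp only [Prod.mk.injEq] at h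
    exact Prod.ext h.2.1 (Prod.ext h.1 h.2.2)

theorem half_sub_inv_nonneg (k : ℕ) : (0 : ℚ) ≤ 1 / 2 - 1 / (2 * k) := by
  rcases Nat.eq_zero_or_pos k with rfl | hk
  · norm_num
  · have : (1 : ℚ) ≤ k := by exact_mod_cast hk
    rw [sub_nonneg]
    gcongr
    linarith

theorem density_le_of_rank {A : Finset (γ × γ × γ)} {r : γ → ℕ} {k : ℕ} (hr : ∀ v, r v < k)
    (hA : ∀ t ∈ A, r t.2.2 < r t.1) : (#A : ℚ) / Fintype.card γ ^ 3 ≤ 1 / 2 - 1 / (2 * k) := by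
  set N := Fintype.card γ
  rcases isEmpty_or_nonempty γ with hγ | ⟨⟨v⟩⟩
  · simpa [N] using half_sub_inv_nonneg k
  have hN : (0 : ℚ) < N := by exact_mod_cast Fintype.card_pos_iff.2 ⟨v⟩
  have hk : (0 : ℚ) < k := by exact_mod_cast (Nat.zero_le _).trans_lt (hr v)
  have hcount : (k : ℚ) * (2 * #A) + N ^ 3 ≤ k * N ^ 3 := by
    have := card_le_mul_card_filter_rank_gt hA
    have := card_filter_rank_gt_le hr
    exact_mod_cast (by nlinarith : k * (2 * #A) + N ^ 3 ≤ k * N ^ 3)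
  rw [div_le_iff₀ (by positivity), show (1 / 2 - 1 / (2 * k) : ℚ) * N ^ 3
    = (k * N ^ 3 - N ^ 3) / (2 * k) by field_simp, le_div_iff₀ (by positivity)]
  linarith

theorem exists_chain_of_half_sub_inv_lt_density (A : Finset (γ × γ × γ)) (k : ℕ)
    (hd : (1 / 2 - 1 / (2 * k) : ℚ) < #A / Fintype.card γ ^ 3) :
    ∃ a b : ℕ → γ, ∀ i < k, (a i, b i, a (i + 1)) ∈ A := by
  by_contra hno
  have hno_walk : ¬ ∃ a : ℕ → γ, ∀ i < k, ∃ c, (a i, c, a (i + 1)) ∈ A := by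
    rintro ⟨a, ha⟩
    have : Nonempty γ := ⟨a 0⟩
    choose! b hb using ha
    exact hno ⟨a, b, hb⟩
  obtain ⟨r, hr, hR⟩ := exists_rank_of_not_exists_walk (R := fun x y => ∃ c, (x, c, y) ∈ A) hno_walk
  exact (density_le_of_rank hr fun t ht => hR _ _ ⟨t.2.1, ht⟩).not_gt hd

end Chains

section Positions

variable {α : Type*} [LinearOrder α]

def posIn (e : Finset α) (u : α) : ℕ := #{x ∈ e | x < u}

theorem posIn_lt_card {e : Finset α} {u : α} (hu : u ∈ e) : posIn e u < #e :=
  card_lt_card (filter_ssubset.2 ⟨u, hu, lt_irrefl u⟩)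

theorem posIn_eq_succ {e : Finset α} {u v : α} (hu : u ∈ e) (huv : u < v)
    (hgap : ∀ x ∈ e, ¬(u < x ∧ x < v)) : posIn e v = posIn e u + 1 := by
  have : {x ∈ e | x < v} = insert u {x ∈ e | x < u} := by
    ext x
    simp only [mem_filter, mem_insert]
    constructor
    · rintro ⟨hx, hxv⟩
      rcases lt_trichotomy x u with h | rfl | h
      exacts [Or.inr ⟨hx, h⟩, Or.inl rfl, absurd ⟨h, hxv⟩ (hgap x hx)]
    · rintro (rfl | ⟨hx, hxu⟩)
      exacts [⟨hu, huv⟩, ⟨hx, hxu.trans huv⟩]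
  rw [posIn, posIn, this, card_insert_of_notMem (by simp)]

theorem sort_triple {u v w : α} (huv : u < v) (hvw : v < w) : sort {u, v, w} = [u, v, w] := by
  rw [sort_insert _ (by simp [huv.le, (huv.trans hvw).le]) (by simp [huv.ne, (huv.trans hvw).ne]),
    sort_insert _ (by simp [hvw.le]) (by simp [hvw.ne]), sort_singleton]

theorem eq_of_triple_eq {u v w u' v' w' : α} (h : ({u, v, w} : Finset α) = {u', v', w'})
    (huv : u < v) (hvw : v < w) (huv' : u' < v') (hvw' : v' < w') :
    u = u' ∧ v = v' ∧ w = w' := by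
  have := congrArg (sort ·) h
  simp only [sort_triple huv hvw, sort_triple huv' hvw', List.cons.injEq, and_true] at this
  exact this

end Positions

section Linear

variable {α : Type*} [DecidableEq α]

def IsLinear (H : Finset (Finset α)) : Prop :=
  ∀ e ∈ H, ∀ f ∈ H, e ≠ f → #(e ∩ f) ≤ 1

theorem IsLinear.eq_of_mem_of_mem {H : Finset (Finset α)} (hH : IsLinear H) {e f : Finset α}
    (he : e ∈ H) (hf : f ∈ H) {u v : α} (huv : u ≠ v) (hue : u ∈ e) (hve : v ∈ e)
    (huf : u ∈ f) (hvf : v ∈ f) : e = f := by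
  by_contra hne
  have : {u, v} ⊆ e ∩ f := by simp [insert_subset_iff, *]
  have := card_le_card this
  rw [card_pair huv] at this
  have := hH e he f hf hne
  omega

end Linear

section Coloring

variable {α γ : Type*} [LinearOrder α]

noncomputable def pairColor (H : Finset (Finset α)) (a b : ℕ → γ) (u v : α) : γ :=
  if h : ∃ e ∈ H, u ∈ e ∧ v ∈ e then
    if posIn h.choose v = posIn h.choose u + 1 then a (posIn h.choose u) else b (posIn h.choose u)
  else a 0

theorem pairColor_eq {H : Finset (Finset α)} (hH : IsLinear H) (a b : ℕ → γ)
    {e : Finset α} (he : e ∈ H) {u v : α} (hu : u ∈ e) (hv : v ∈ e) (huv : u ≠ v) :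
    pairColor H a b u v = if posIn e v = posIn e u + 1 then a (posIn e u) else b (posIn e u) := by
  have h : ∃ e ∈ H, u ∈ e ∧ v ∈ e := ⟨e, he, hu, hv⟩
  obtain ⟨he', hu', hv'⟩ := h.choose_spec
  rw [pairColor, dif_pos h, hH.eq_of_mem_of_mem he' he huv hu' hv' hu hv]

theorem admits_Fk_of_chain {n : ℕ} {H : Finset (Finset (Fin n))} (hH : IsLinear H) {k : ℕ}
    (hcard : ∀ e ∈ H, #e ≤ k + 2) {A : Set (γ × γ × γ)} {a b : ℕ → γ}
    (hab : ∀ i < k, (a i, b i, a (i + 1)) ∈ A) : Admits (Fk H) A := by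
  refine ⟨Fin.val, fun u v => pairColor H a b (min u v) (max u v), Fin.val_injective,
    fun u v => congrArg₂ (pairColor H a b) (min_comm u v) (max_comm u v), ?_⟩
  rintro u v w ⟨e, he, u', v', w', ht, huv', hvw', hu, hv, hw, hgap_uv, hgap_vw⟩ huv hvw
  obtain ⟨rfl, rfl, rfl⟩ := eq_of_triple_eq ht huv hvw huv' hvw'
  have hpv := posIn_eq_succ hu huv hgap_uv
  have hpw := posIn_eq_succ hv hvw hgap_vw
  have hk : posIn e u < k := by
    have := posIn_lt_card hw
    have := hcard e he
    omega
  have huw : u < w := huv'.trans hvw'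
  simp only [min_eq_left huv'.le, max_eq_right huv'.le, min_eq_left huw.le, max_eq_right huw.le,
    min_eq_left hvw'.le, max_eq_right hvw'.le]
  rw [pairColor_eq hH a b he hu hv huv'.ne, pairColor_eq hH a b he hu hw huw.ne,
    pairColor_eq hH a b he hv hw hvw'.ne, if_pos hpv, if_neg (by omega), if_pos hpw, hpv]
  exact hab _ hk

end Coloring

theorem stmt10_general (k : ℕ) (n : ℕ) (H : Finset (Finset (Fin n)))
    (huni : ∀ e ∈ H, e.card = k + 2)
    (hlin : ∀ e ∈ H, ∀ f ∈ H, e ≠ f → (e ∩ f).card ≤ 1)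
    {γ : Type*} [Fintype γ] (A : Finset (γ × γ × γ))
    (hd : (1 / 2 - 1 / (2 * k) : ℚ) < (A.card : ℚ) / (Fintype.card γ : ℚ) ^ 3) :
    Admits (Fk H) (↑A : Set (γ × γ × γ)) := by
  obtain ⟨a, b, hab⟩ := exists_chain_of_half_sub_inv_lt_density A k hd
  exact admits_Fk_of_chain hlin (fun e he => (huni e he).le) hab

/-- If `H` is a linear `(k+2)`-uniform hypergraph on `[n]`, then the 3-graph `F_k`
admits every palette of density greater than `1/2 - 1/(2k)`. -/
theorem stmt10 (k : ℕ) (hk : 2 ≤ k) (n : ℕ) (H : Finset (Finset (Fin n)))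
    (huni : ∀ e ∈ H, e.card = k + 2)
    (hlin : ∀ e ∈ H, ∀ f ∈ H, e ≠ f → (e ∩ f).card ≤ 1)
    {γ : Type*} [Fintype γ] (A : Finset (γ × γ × γ))
    (hd : (1 / 2 - 1 / (2 * k) : ℚ) < (A.card : ℚ) / (Fintype.card γ : ℚ) ^ 3) :
    Admits (Fk H) (↑A : Set (γ × γ × γ)) :=
  stmt10_general k n H huni hlin A hd
end

section
/- For every $k \geq 3$ there exists a positive integer $n$ and a linear $k$-uniform hypergraph $H$ on vertex set $[n]$ such that for every permutation $\sigma$ of $[n]$ there exists an edge $e$ of $H$ on whose vertices $\sigma$ is monotone (increasing or decreasing with respect to the natural order). -/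
/-!
By Erdős–Szekeres every `(k-1)^2+1` points of `[n]` contain `k` on which a given permutation `σ`
is monotone, so double counting shows that at least `C(n,k) / C((k-1)^2+1, k)` of the `k`-subsets
of `[n]` are monotone for `σ`. Edges are then chosen greedily. While fewer than `J` edges have been
chosen, the `k`-sets meeting one of them in two points number at most `J C(k,2) C(n-2,k-2)`, which
is at most half of that bound as long as `c J C(k,2)^2 ≤ C(n,2)`, where `c = 2 C((k-1)^2+1, k)`.
Averaging over the permutations not yet monotone on any edge then yields an edge that keeps the
hypergraph linear and is monotone for a `1/c` fraction of them, so after `J` steps at most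
`n! (1 - 1/c)^J < n! / 2^(J/c)` permutations survive. For `n = 2^D` and `J = c n D` this is less
than `n! / 2^(nD) ≤ 1`, while `c J C(k,2)^2 ≤ C(n,2)` as soon as `2 c^2 C(k,2)^2 D < 2^D`.
-/

open Finset
open scoped Nat

noncomputable section

open scoped Classical

def StrictMonoOrAntiOn {α β : Type*} [Preorder α] [Preorder β] (f : α → β) (s : Finset α) :
    Prop :=
  StrictMonoOn f s ∨ StrictAntiOn f s

section ErdosSzekeres

variable {α β γ : Type*} [LinearOrder α] [Preorder β] [LinearOrder γ] {f : α → β}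
  {s : Finset α} {a b : α}

def strictMonoSubsetsEndingAt (f : α → β) (s : Finset α) (a : α) : Finset (Finset α) :=
  {t ∈ s.powerset | a ∈ t ∧ (∀ x ∈ t, x ≤ a) ∧ StrictMonoOn f t}

theorem mem_strictMonoSubsetsEndingAt {t : Finset α} :
    t ∈ strictMonoSubsetsEndingAt f s a ↔
      t ⊆ s ∧ a ∈ t ∧ (∀ x ∈ t, x ≤ a) ∧ StrictMonoOn f t := by
  rw [strictMonoSubsetsEndingAt, mem_filter, mem_powerset]

theorem singleton_mem_strictMonoSubsetsEndingAt (ha : a ∈ s) :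
    {a} ∈ strictMonoSubsetsEndingAt f s a := by
  simp [mem_strictMonoSubsetsEndingAt, ha]

def longestStrictMonoEndingAt (f : α → β) (s : Finset α) (a : α) : ℕ :=
  (strictMonoSubsetsEndingAt f s a).sup card

theorem one_le_longestStrictMonoEndingAt (ha : a ∈ s) : 1 ≤ longestStrictMonoEndingAt f s a :=
  le_sup (f := card) (singleton_mem_strictMonoSubsetsEndingAt ha)

theorem longestStrictMonoEndingAt_le {r : ℕ} (h : ∀ t ⊆ s, StrictMonoOn f t → #t ≤ r) :
    longestStrictMonoEndingAt f s a ≤ r :=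
  Finset.sup_le fun t ht =>
    h t (mem_strictMonoSubsetsEndingAt.1 ht).1 (mem_strictMonoSubsetsEndingAt.1 ht).2.2.2

theorem longestStrictMonoEndingAt_lt (ha : a ∈ s) (hb : b ∈ s) (hab : a < b) (hf : f a < f b) :
    longestStrictMonoEndingAt f s a < longestStrictMonoEndingAt f s b := by
  obtain ⟨t, ht, hmax⟩ :=
    exists_mem_eq_sup _ ⟨_, singleton_mem_strictMonoSubsetsEndingAt (f := f) ha⟩ card
  obtain ⟨hts, hat, hle, hmono⟩ := mem_strictMonoSubsetsEndingAt.1 ht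
  have hbt : b ∉ t := fun hbt => (hle b hbt).not_gt hab
  have hle' : ∀ x ∈ t, x ≤ b := fun x hx => (hle x hx).trans hab.le
  have hins : insert b t ∈ strictMonoSubsetsEndingAt f s b := by
    refine mem_strictMonoSubsetsEndingAt.2 ⟨insert_subset hb hts, mem_insert_self b t,
      (forall_mem_insert _ _ _).2 ⟨le_rfl, hle'⟩, ?_⟩
    rw [coe_insert, strictMonoOn_insert_iff_of_forall_le hle']
    refine ⟨fun x hx _ => ?_, hmono⟩
    rcases (hle x hx).lt_or_eq with hxa | rfl
    · exact (hmono hx hat hxa).trans hf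
    · exact hf
  calc longestStrictMonoEndingAt f s a = #t := hmax
    _ < #(insert b t) := by rw [card_insert_of_notMem hbt]; omega
    _ ≤ longestStrictMonoEndingAt f s b := le_sup (f := card) hins

theorem longestStrictMonoEndingAt_pair_ne {g : α → γ} (hg : Set.InjOn g s) (ha : a ∈ s)
    (hb : b ∈ s) (hab : a < b) :
    (longestStrictMonoEndingAt g s a, longestStrictMonoEndingAt (OrderDual.toDual ∘ g) s a) ≠
      (longestStrictMonoEndingAt g s b,
        longestStrictMonoEndingAt (OrderDual.toDual ∘ g) s b) := by
  rcases lt_or_gt_of_ne (hg.ne ha hb hab.ne) with hgab | hgba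
  · exact fun h => (longestStrictMonoEndingAt_lt ha hb hab hgab).ne (congrArg Prod.fst h)
  · exact fun h => (longestStrictMonoEndingAt_lt (f := OrderDual.toDual ∘ g) ha hb hab hgba).ne
      (congrArg Prod.snd h)

theorem erdos_szekeres {g : α → γ} (hg : Set.InjOn g s) {r q : ℕ} (h : r * q < #s) :
    (∃ t ⊆ s, r < #t ∧ StrictMonoOn g t) ∨ (∃ t ⊆ s, q < #t ∧ StrictAntiOn g t) := by
  by_contra! hcon
  have hinc : ∀ t ⊆ s, StrictMonoOn g t → #t ≤ r := fun t hts ht =>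
    not_lt.1 fun hr => hcon.1 t hts hr ht
  have hdec : ∀ t ⊆ s, StrictMonoOn (OrderDual.toDual ∘ g) t → #t ≤ q := fun t hts ht =>
    not_lt.1 fun hq => hcon.2 t hts hq (strictMonoOn_toDual_comp_iff.1 ht)
  set label := fun a =>
    (longestStrictMonoEndingAt g s a, longestStrictMonoEndingAt (OrderDual.toDual ∘ g) s a)
  have hmaps : Set.MapsTo label s ↑(Icc 1 r ×ˢ Icc 1 q) := by
    intro a ha
    simp only [label, coe_product, coe_Icc, Set.mem_prod, Set.mem_Icc]
    exact ⟨⟨one_le_longestStrictMonoEndingAt ha, longestStrictMonoEndingAt_le hinc⟩,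
      one_le_longestStrictMonoEndingAt ha, longestStrictMonoEndingAt_le hdec⟩
  have hinj : Set.InjOn label s := by
    intro a ha b hb heq
    by_contra hne
    rcases lt_or_gt_of_ne hne with hab | hba
    · exact longestStrictMonoEndingAt_pair_ne hg ha hb hab heq
    · exact longestStrictMonoEndingAt_pair_ne hg hb ha hba heq.symm
  have := card_le_card_of_injOn label hmaps hinj
  simp only [card_product, Nat.card_Icc, add_tsub_cancel_right] at this
  omega

theorem exists_subset_card_eq_strictMonoOrAntiOn {g : α → γ} (hg : Set.InjOn g s) {k : ℕ}
    (hk : 1 ≤ k) (hs : (k - 1) * (k - 1) < #s) :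
    ∃ t ⊆ s, #t = k ∧ StrictMonoOrAntiOn g t := by
  rcases erdos_szekeres hg hs with ⟨t, hts, ht, hmono⟩ | ⟨t, hts, ht, hanti⟩
  · obtain ⟨u, hut, hu⟩ := exists_subset_card_eq (show k ≤ #t by omega)
    exact ⟨u, hut.trans hts, hu, Or.inl (hmono.mono (coe_subset.2 hut))⟩
  · obtain ⟨u, hut, hu⟩ := exists_subset_card_eq (show k ≤ #t by omega)
    exact ⟨u, hut.trans hts, hu, Or.inr (hanti.mono (coe_subset.2 hut))⟩

end ErdosSzekeres

section Counting

variable {α : Type*} [Fintype α] [DecidableEq α]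

theorem card_filter_subset_powersetCard {t : Finset α} {m : ℕ} (h : #t ≤ m) :
    #{u ∈ powersetCard m univ | t ⊆ u} = (Fintype.card α - #t).choose (m - #t) := by
  calc #{u ∈ powersetCard m univ | t ⊆ u} = #(powersetCard (m - #t) (univ \ t)) := by
        refine card_nbij' (· \ t) (· ∪ t) (fun u hu => ?_) (fun v hv => ?_)
          (fun u hu => sdiff_union_of_subset (mem_filter.1 hu).2)
          (fun v hv => union_sdiff_cancel_right (subset_sdiff.1 (mem_powersetCard.1 hv).1).2)
        · obtain ⟨hu, htu⟩ := mem_filter.1 hu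
          rw [mem_coe, mem_powersetCard, card_sdiff_of_subset htu, (mem_powersetCard.1 hu).2]
          exact ⟨sdiff_subset_sdiff (subset_univ u) le_rfl, rfl⟩
        · obtain ⟨hvt, hv⟩ := mem_powersetCard.1 hv
          rw [mem_coe, mem_filter, mem_powersetCard,
            card_union_of_disjoint (subset_sdiff.1 hvt).2, hv]
          exact ⟨⟨subset_univ _, by omega⟩, subset_union_right⟩
    _ = _ := by rw [card_powersetCard, card_sdiff_of_subset (subset_univ t), card_univ]

theorem choose_le_choose_mul_card_of_forall_exists_subset {M : Finset (Finset α)} {k K : ℕ}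
    (hkK : k ≤ K) (hK : K ≤ Fintype.card α) (hMk : ∀ t ∈ M, #t = k)
    (hM : ∀ u : Finset α, #u = K → ∃ t ∈ M, t ⊆ u) :
    (Fintype.card α).choose k ≤ K.choose k * #M := by
  have hdouble : #(powersetCard K (univ : Finset α)) * 1 ≤
      #M * (Fintype.card α - k).choose (K - k) := by
    refine card_mul_le_card_mul (fun u t => t ⊆ u) (fun u hu => ?_) (fun t ht => ?_)
    · obtain ⟨t, htM, htu⟩ := hM u (mem_powersetCard.1 hu).2
      exact card_pos.2 ⟨t, (mem_bipartiteAbove _).2 ⟨htM, htu⟩⟩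
    · rw [bipartiteBelow, ← hMk t ht, card_filter_subset_powersetCard (hMk t ht ▸ hkK)]
  rw [card_powersetCard, card_univ, mul_one] at hdouble
  refine Nat.le_of_mul_le_mul_right ?_ (Nat.choose_pos (Nat.sub_le_sub_right hK k))
  calc (Fintype.card α).choose k * (Fintype.card α - k).choose (K - k)
      = (Fintype.card α).choose K * K.choose k := (Nat.choose_mul hkK).symm
    _ ≤ #M * (Fintype.card α - k).choose (K - k) * K.choose k := by gcongr
    _ = K.choose k * #M * (Fintype.card α - k).choose (K - k) := by ring

theorem card_filter_two_le_card_inter_le (f : Finset α) {k : ℕ} (hk : 2 ≤ k) :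
    #{e ∈ powersetCard k (univ : Finset α) | 2 ≤ #(e ∩ f)} ≤
      (#f).choose 2 * (Fintype.card α - 2).choose (k - 2) := by
  have hcover : {e ∈ powersetCard k (univ : Finset α) | 2 ≤ #(e ∩ f)} ⊆
      (powersetCard 2 f).biUnion fun p => {e ∈ powersetCard k univ | p ⊆ e} := by
    intro e he
    obtain ⟨he, h2⟩ := mem_filter.1 he
    obtain ⟨p, hp, hpcard⟩ := exists_subset_card_eq h2
    exact mem_biUnion.2 ⟨p, mem_powersetCard.2 ⟨hp.trans inter_subset_right, hpcard⟩,
      mem_filter.2 ⟨he, hp.trans inter_subset_left⟩⟩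
  calc _ ≤ _ := card_le_card hcover
    _ ≤ ∑ p ∈ powersetCard 2 f, #{e ∈ powersetCard k univ | p ⊆ e} := card_biUnion_le
    _ = ∑ p ∈ powersetCard 2 f, (Fintype.card α - 2).choose (k - 2) := by
        refine sum_congr rfl fun p hp => ?_
        rw [card_filter_subset_powersetCard, (mem_powersetCard.1 hp).2]
        rwa [(mem_powersetCard.1 hp).2]
    _ = _ := by rw [sum_const, card_powersetCard, smul_eq_mul]

end Counting

theorem choose_le_mul_card_strictMonoOrAntiOn {α β : Type*} [Fintype α] [LinearOrder α]
    [LinearOrder β] {f : α → β} (hf : Function.Injective f) {k : ℕ} (hk : 1 ≤ k)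
    (hkn : (k - 1) * (k - 1) + 1 ≤ Fintype.card α) :
    (Fintype.card α).choose k ≤ ((k - 1) * (k - 1) + 1).choose k *
      #{e ∈ powersetCard k (univ : Finset α) | StrictMonoOrAntiOn f e} := by
  refine choose_le_choose_mul_card_of_forall_exists_subset (k := k)
    (by have := Nat.le_mul_self (k - 1); omega) hkn
    (fun e he => (mem_powersetCard.1 (mem_filter.1 he).1).2) fun u hu => ?_
  obtain ⟨t, htu, ht, hmono⟩ :=
    exists_subset_card_eq_strictMonoOrAntiOn hf.injOn hk (show _ < #u by omega)
  exact ⟨t, mem_filter.2 ⟨mem_powersetCard.2 ⟨subset_univ t, ht⟩, hmono⟩, htu⟩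

theorem exists_mem_card_le_mul_card_filter {ι κ : Type*} {B : Finset ι} {A : Finset κ}
    (r : ι → κ → Prop) [∀ i a, Decidable (r i a)] {N c : ℕ} (hA : A.Nonempty)
    (hAN : #A ≤ N) (hB : ∀ i ∈ B, N ≤ c * #{a ∈ A | r i a}) :
    ∃ a ∈ A, #B ≤ c * #{i ∈ B | r i a} := by
  refine exists_le_of_sum_le hA ?_
  calc ∑ _a ∈ A, #B = #A * #B := by rw [sum_const, smul_eq_mul]
    _ ≤ N * #B := by gcongr
    _ = ∑ _i ∈ B, N := by rw [sum_const, smul_eq_mul, mul_comm]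
    _ ≤ ∑ i ∈ B, c * #{a ∈ A | r i a} := sum_le_sum hB
    _ = ∑ a ∈ A, c * #{i ∈ B | r i a} := by
        rw [← mul_sum, ← mul_sum]
        exact congrArg _ (sum_card_bipartiteAbove_eq_sum_card_bipartiteBelow r)

theorem mul_le_sub_one_mul_of_add_eq {a b m c : ℕ} (h : a + b = m) (hm : m ≤ c * b) :
    c * a ≤ (c - 1) * m := by
  have : c * a + c * b = c * m := by rw [← mul_add, h]
  rw [Nat.sub_one_mul]
  omega

section LinearHypergraph

variable {α : Type*} [LinearOrder α]

def IsLinearHypergraph (H : Finset (Finset α)) : Prop :=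
  ∀ e ∈ H, ∀ f ∈ H, e ≠ f → #(e ∩ f) ≤ 1

theorem IsLinearHypergraph.insert {H : Finset (Finset α)} {e : Finset α}
    (hH : IsLinearHypergraph H) (he : ∀ f ∈ H, #(e ∩ f) ≤ 1) :
    IsLinearHypergraph (insert e H) := by
  intro e₁ h₁ e₂ h₂ hne
  rcases mem_insert.1 h₁ with rfl | h₁
  · rcases mem_insert.1 h₂ with rfl | h₂
    · exact absurd rfl hne
    · exact he e₂ h₂
  · rcases mem_insert.1 h₂ with h₂ | h₂
    · rw [h₂, inter_comm]; exact he e₁ h₁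
    · exact hH e₁ h₁ e₂ h₂ hne

variable [Fintype α] {k : ℕ}

def admissibleEdges (k : ℕ) (F : Finset (Finset α)) : Finset (Finset α) :=
  {e ∈ powersetCard k univ | ∀ f ∈ F, #(e ∩ f) ≤ 1}

theorem mem_admissibleEdges {F : Finset (Finset α)} {e : Finset α} :
    e ∈ admissibleEdges k F ↔ #e = k ∧ ∀ f ∈ F, #(e ∩ f) ≤ 1 := by
  simp [admissibleEdges]

def permsMonotoneOnNoEdge (H : Finset (Finset α)) : Finset (Equiv.Perm α) :=
  {σ | ∀ e ∈ H, ¬ StrictMonoOrAntiOn σ e}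

theorem permsMonotoneOnNoEdge_insert (H : Finset (Finset α)) (e : Finset α) :
    permsMonotoneOnNoEdge (insert e H) =
      (permsMonotoneOnNoEdge H).filter fun σ : Equiv.Perm α => ¬ StrictMonoOrAntiOn σ e := by
  ext σ
  simp only [permsMonotoneOnNoEdge, mem_filter, mem_univ, true_and, forall_mem_insert]
  exact and_comm

theorem card_filter_notMem_admissibleEdges_le {F : Finset (Finset α)} (hk : 2 ≤ k)
    (hFk : ∀ f ∈ F, #f = k) :
    #{e ∈ powersetCard k univ | e ∉ admissibleEdges k F} ≤
      #F * (k.choose 2 * (Fintype.card α - 2).choose (k - 2)) := by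
  have hcover : {e ∈ powersetCard k (univ : Finset α) | e ∉ admissibleEdges k F} ⊆
      F.biUnion fun f => {e ∈ powersetCard k univ | 2 ≤ #(e ∩ f)} := by
    intro e he
    obtain ⟨he, hbad⟩ := mem_filter.1 he
    rw [mem_admissibleEdges, (mem_powersetCard.1 he).2] at hbad
    push Not at hbad
    obtain ⟨f, hf, h2⟩ := hbad rfl
    exact mem_biUnion.2 ⟨f, hf, mem_filter.2 ⟨he, h2⟩⟩
  calc _ ≤ _ := card_le_card hcover
    _ ≤ ∑ f ∈ F, #{e ∈ powersetCard k univ | 2 ≤ #(e ∩ f)} := card_biUnion_le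
    _ ≤ ∑ _f ∈ F, k.choose 2 * (Fintype.card α - 2).choose (k - 2) :=
        sum_le_sum fun f hf => by simpa only [hFk f hf] using card_filter_two_le_card_inter_le f hk
    _ = _ := by rw [sum_const, smul_eq_mul]

theorem choose_le_mul_card_filter_admissibleEdges (hk : 2 ≤ k)
    (hkn : (k - 1) * (k - 1) + 1 ≤ Fintype.card α) {F : Finset (Finset α)}
    (hFk : ∀ f ∈ F, #f = k)
    (hF : 2 * ((k - 1) * (k - 1) + 1).choose k * #F *
      (k.choose 2 * (Fintype.card α - 2).choose (k - 2)) ≤ (Fintype.card α).choose k)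
    (σ : Equiv.Perm α) :
    (Fintype.card α).choose k ≤ 2 * ((k - 1) * (k - 1) + 1).choose k *
      #{e ∈ admissibleEdges k F | StrictMonoOrAntiOn σ e} := by
  have hall := choose_le_mul_card_strictMonoOrAntiOn σ.injective (by omega) hkn
  have hsplit : #{e ∈ powersetCard k univ | StrictMonoOrAntiOn σ e} ≤
      #{e ∈ admissibleEdges k F | StrictMonoOrAntiOn σ e} +
        #{e ∈ powersetCard k univ | e ∉ admissibleEdges k F} := by
    refine (card_le_card fun e he => ?_).trans (card_union_le _ _)
    obtain ⟨he, hmono⟩ := mem_filter.1 he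
    by_cases hadm : e ∈ admissibleEdges k F
    · exact mem_union_left _ (mem_filter.2 ⟨hadm, hmono⟩)
    · exact mem_union_right _ (mem_filter.2 ⟨he, hadm⟩)
  have hbad := card_filter_notMem_admissibleEdges_le hk hFk
  nlinarith

theorem exists_mem_admissibleEdges_card_permsMonotoneOnNoEdge_le (hk : 2 ≤ k)
    (hkn : (k - 1) * (k - 1) + 1 ≤ Fintype.card α) {F : Finset (Finset α)}
    (hFk : ∀ f ∈ F, #f = k)
    (hF : 2 * ((k - 1) * (k - 1) + 1).choose k * #F *
      (k.choose 2 * (Fintype.card α - 2).choose (k - 2)) ≤ (Fintype.card α).choose k) :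
    ∃ e ∈ admissibleEdges k F,
      #(permsMonotoneOnNoEdge F) ≤ 2 * ((k - 1) * (k - 1) + 1).choose k *
        #((permsMonotoneOnNoEdge F).filter fun σ : Equiv.Perm α => StrictMonoOrAntiOn σ e) := by
  have hmany := choose_le_mul_card_filter_admissibleEdges hk hkn hFk hF
  have hA : (admissibleEdges k F).Nonempty := by
    have hkn' : k ≤ Fintype.card α := by have := Nat.le_mul_self (k - 1); omega
    obtain ⟨e, he⟩ := card_pos.1 (Nat.pos_of_mul_pos_left ((Nat.choose_pos hkn').trans_le
      (hmany 1)))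
    exact ⟨e, (mem_filter.1 he).1⟩
  have hAN : #(admissibleEdges k F) ≤ (Fintype.card α).choose k := by
    simpa only [admissibleEdges, card_powersetCard, card_univ] using
      card_filter_le (powersetCard k univ) _
  exact exists_mem_card_le_mul_card_filter (fun (σ : Equiv.Perm α) e => StrictMonoOrAntiOn σ e)
    hA hAN
    fun σ _ => hmany σ

theorem exists_isLinearHypergraph_card_permsMonotoneOnNoEdge_le (hk : 2 ≤ k)
    (hkn : (k - 1) * (k - 1) + 1 ≤ Fintype.card α) {J : ℕ}
    (hJ : 2 * ((k - 1) * (k - 1) + 1).choose k * J *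
      (k.choose 2 * (Fintype.card α - 2).choose (k - 2)) ≤ (Fintype.card α).choose k) :
    ∀ j ≤ J, ∃ H : Finset (Finset α), IsLinearHypergraph H ∧ (∀ e ∈ H, #e = k) ∧
      #H ≤ j ∧
      (2 * ((k - 1) * (k - 1) + 1).choose k) ^ j * #(permsMonotoneOnNoEdge H) ≤
        (2 * ((k - 1) * (k - 1) + 1).choose k - 1) ^ j * (Fintype.card α)! := by
  set c := 2 * ((k - 1) * (k - 1) + 1).choose k
  intro j hj
  induction j with
  | zero =>
    refine ⟨∅, by simp [IsLinearHypergraph], by simp, le_rfl, ?_⟩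
    simpa only [pow_zero, one_mul, Fintype.card_perm] using
      card_le_univ (permsMonotoneOnNoEdge (∅ : Finset (Finset α)))
  | succ j ih =>
    obtain ⟨F, hlin, hFk, hFj, hF⟩ := ih (by omega)
    obtain ⟨e, he, hhit⟩ := exists_mem_admissibleEdges_card_permsMonotoneOnNoEdge_le hk hkn hFk
      (le_trans (by gcongr; omega) hJ)
    obtain ⟨hek, hadm⟩ := mem_admissibleEdges.1 he
    refine ⟨insert e F, hlin.insert hadm, (forall_mem_insert _ _ _).2 ⟨hek, hFk⟩,
      (card_insert_le _ _).trans (by omega), ?_⟩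
    have hstep : c * #(permsMonotoneOnNoEdge (insert e F)) ≤
        (c - 1) * #(permsMonotoneOnNoEdge F) := by
      rw [permsMonotoneOnNoEdge_insert]
      refine mul_le_sub_one_mul_of_add_eq ?_ hhit
      rw [add_comm]
      exact card_filter_add_card_filter_not _
    calc c ^ (j + 1) * #(permsMonotoneOnNoEdge (insert e F))
        = c ^ j * (c * #(permsMonotoneOnNoEdge (insert e F))) := by ring
      _ ≤ c ^ j * ((c - 1) * #(permsMonotoneOnNoEdge F)) := by gcongr
      _ = (c - 1) * (c ^ j * #(permsMonotoneOnNoEdge F)) := by ring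
      _ ≤ (c - 1) * ((c - 1) ^ j * (Fintype.card α)!) := by gcongr
      _ = (c - 1) ^ (j + 1) * (Fintype.card α)! := by ring

theorem exists_isLinearHypergraph_forall_perm_exists_strictMonoOrAntiOn (hk : 2 ≤ k)
    (hkn : (k - 1) * (k - 1) + 1 ≤ Fintype.card α) {J : ℕ}
    (hJ : 2 * ((k - 1) * (k - 1) + 1).choose k * J *
      (k.choose 2 * (Fintype.card α - 2).choose (k - 2)) ≤ (Fintype.card α).choose k)
    (hfac : (Fintype.card α)! * (2 * ((k - 1) * (k - 1) + 1).choose k - 1) ^ J <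
      (2 * ((k - 1) * (k - 1) + 1).choose k) ^ J) :
    ∃ H : Finset (Finset α), IsLinearHypergraph H ∧ (∀ e ∈ H, #e = k) ∧
      ∀ σ : Equiv.Perm α, ∃ e ∈ H, StrictMonoOrAntiOn σ e := by
  obtain ⟨H, hlin, hHk, -, hH⟩ :=
    exists_isLinearHypergraph_card_permsMonotoneOnNoEdge_le hk hkn hJ J le_rfl
  have hempty : permsMonotoneOnNoEdge H = ∅ := by
    rw [← card_eq_zero]
    by_contra h0
    have := Nat.mul_le_mul_left ((2 * ((k - 1) * (k - 1) + 1).choose k) ^ J)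
      (Nat.one_le_iff_ne_zero.2 h0)
    linarith
  refine ⟨H, hlin, hHk, fun σ => ?_⟩
  have hσ : σ ∉ permsMonotoneOnNoEdge H := hempty ▸ notMem_empty σ
  simpa [permsMonotoneOnNoEdge] using hσ

end LinearHypergraph

theorem mul_mul_choose_sub_two_le_choose {m n k : ℕ} (hk : 2 ≤ k) (hn : 2 ≤ n)
    (h : m * k.choose 2 ^ 2 ≤ n.choose 2) :
    m * (k.choose 2 * (n - 2).choose (k - 2)) ≤ n.choose k := by
  refine Nat.le_of_mul_le_mul_right ?_ (Nat.choose_pos hn)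
  calc m * (k.choose 2 * (n - 2).choose (k - 2)) * n.choose 2
      = m * k.choose 2 * (n.choose 2 * (n - 2).choose (k - 2)) := by ring
    _ = m * k.choose 2 ^ 2 * n.choose k := by rw [← Nat.choose_mul hk]; ring
    _ ≤ n.choose 2 * n.choose k := by gcongr
    _ = n.choose k * n.choose 2 := mul_comm _ _

theorem two_mul_sub_one_pow_self_lt {c : ℕ} (hc : 2 ≤ c) : 2 * (c - 1) ^ c < c ^ c := by
  have hbern := pow_add_mul_le_add_pow (a := c - 1) (b := 1) (Nat.zero_le _) (Nat.zero_le _) c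
  rw [Nat.sub_add_cancel (by omega : 1 ≤ c), mul_one, Nat.cast_id] at hbern
  have hlt : (c - 1) ^ c < c * (c - 1) ^ (c - 1) := by
    conv_lhs => rw [← Nat.sub_add_cancel (by omega : 1 ≤ c), pow_succ']
    exact Nat.mul_lt_mul_of_pos_right (by omega) (pow_pos (by omega) _)
  omega

theorem factorial_two_pow_mul_sub_one_pow_lt {c D : ℕ} (hc : 2 ≤ c) (hD : 0 < D) :
    (2 ^ D)! * (c - 1) ^ (c * (2 ^ D * D)) < c ^ (c * (2 ^ D * D)) :=
  calc (2 ^ D)! * (c - 1) ^ (c * (2 ^ D * D))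
      ≤ (2 ^ D) ^ 2 ^ D * (c - 1) ^ (c * (2 ^ D * D)) := by gcongr; exact Nat.factorial_le_pow _
    _ = (2 * (c - 1) ^ c) ^ (2 ^ D * D) := by ring
    _ < (c ^ c) ^ (2 ^ D * D) :=
        Nat.pow_lt_pow_left (two_mul_sub_one_pow_self_lt hc) (by positivity)
    _ = c ^ (c * (2 ^ D * D)) := by ring

theorem exists_pos_mul_lt_two_pow (W : ℕ) : ∃ D, 0 < D ∧ W * D < 2 ^ D := by
  refine ⟨(W + 3) * (W + 3), by positivity, ?_⟩
  calc W * ((W + 3) * (W + 3)) < (W + 3) ^ 3 := by nlinarith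
    _ < (2 ^ (W + 3)) ^ 3 := Nat.pow_lt_pow_left Nat.lt_two_pow_self (by norm_num)
    _ = 2 ^ (3 * (W + 3)) := by ring
    _ ≤ 2 ^ ((W + 3) * (W + 3)) := Nat.pow_le_pow_right (by norm_num) (by nlinarith)

theorem exists_greedy_parameters {k : ℕ} (hk : 2 ≤ k) :
    ∃ n J : ℕ, 0 < n ∧ (k - 1) * (k - 1) + 1 ≤ n ∧
      2 * ((k - 1) * (k - 1) + 1).choose k * J * (k.choose 2 * (n - 2).choose (k - 2)) ≤
        n.choose k ∧
      n ! * (2 * ((k - 1) * (k - 1) + 1).choose k - 1) ^ J <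
        (2 * ((k - 1) * (k - 1) + 1).choose k) ^ J := by
  set K := (k - 1) * (k - 1) + 1
  set c := 2 * K.choose k
  have hc : 2 ≤ c := by
    have := Nat.choose_pos (show k ≤ K by have := Nat.le_mul_self (k - 1); omega)
    omega
  obtain ⟨D, hD, hWD⟩ := exists_pos_mul_lt_two_pow (2 * c * c * k.choose 2 ^ 2 + K)
  have hn : 2 ≤ 2 ^ D := Nat.le_self_pow hD.ne' 2
  have hW := Nat.le_mul_of_pos_right (2 * c * c * k.choose 2 ^ 2 + K) hD
  refine ⟨2 ^ D, c * (2 ^ D * D), by omega, by omega,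
    mul_mul_choose_sub_two_le_choose hk hn ?_, factorial_two_pow_mul_sub_one_pow_lt hc hD⟩
  have hchoose : (2 ^ D).choose 2 * 2 = 2 ^ D * (2 ^ D - 1) := by
    rw [Nat.choose_two_right, Nat.div_mul_cancel (Nat.even_mul_pred_self _).two_dvd]
  have hslack : 2 * c * c * k.choose 2 ^ 2 * D ≤ 2 ^ D - 1 := by
    have := Nat.mul_le_mul_right D (Nat.le_add_right (2 * c * c * k.choose 2 ^ 2) K)
    omega
  nlinarith

end

/-- For every `k ≥ 3` there exists `n ≥ 1` and a linear `k`-uniform hypergraph `H`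
on `[n]` such that every permutation of `[n]` is monotone on the vertices of some
edge of `H`. -/
theorem stmt11 (k : ℕ) (hk : 3 ≤ k) :
    ∃ (n : ℕ), 0 < n ∧ ∃ H : Finset (Finset (Fin n)),
      (∀ e ∈ H, e.card = k) ∧
      (∀ e ∈ H, ∀ f ∈ H, e ≠ f → (e ∩ f).card ≤ 1) ∧
      ∀ σ : Equiv.Perm (Fin n), ∃ e ∈ H,
        StrictMonoOn σ (↑e : Set (Fin n)) ∨ StrictAntiOn σ (↑e : Set (Fin n)) := by
  obtain ⟨n, J, hn, hkn, hJ, hfac⟩ := exists_greedy_parameters (k := k) (by omega)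
  rw [← Fintype.card_fin n] at hkn hJ hfac
  obtain ⟨H, hlin, hHk, hmono⟩ :=
    exists_isLinearHypergraph_forall_perm_exists_strictMonoOrAntiOn (by omega) hkn hJ hfac
  exact ⟨n, hn, H, hHk, hlin, hmono⟩
end

section
/- For every $m$ there exists $n$ with the following property. Let $H$ be an $n$-reduced hypergraph with vertex sets $V_{\alpha\beta}$, and suppose for each ordered triple of distinct indices $\alpha, \beta, \gamma \in [n]$ we have a set $B_{\alpha\beta}^\gamma \subseteq V_{\alpha\beta}$ with $|B_{\alpha\beta}^\gamma| \leq 0.1|V_{\alpha\beta}|$. Then there exists a subset $U \subseteq [n]$ of $m$ indices and for each pair $\alpha, \beta \in U$ a vertex $v_{\alpha\beta} \in V_{\alpha\beta}$ such that $v_{\alpha\beta} \notin B_{\alpha\beta}^\gamma$ for all distinct $\alpha, \beta, \gamma \in U$. -/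
/-!
Colour each `m`-subset `R` of `[n]` by the set of position pairs `(i, j)` such that the `i`-th
and `j`-th elements `a < b` of `R` admit a vertex of `V_{ab}` outside all `B_{ab}^c`, `c ∈ R`.
By Ramsey's theorem some `(6m+2)`-set `W` has all its `m`-subsets of one colour. That colour
contains every pair `i < j`: for `a, b` in positions `2m` and `4m+1` of `W`, averaging gives a
`v ∈ V_{ab}` lying in at most `6m/10 ≤ m` of the sets `B_{ab}^c`, `c ∈ W`, so each of the three
blocks of `2m` elements of `W` around `a` and `b` keeps `m` elements `c` with `v ∉ B_{ab}^c`;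
from these one builds an `m`-subset of `W` with `a, b` in positions `i, j` in which `v` is good.
Hence any `m`-subset of `W` works.

Ramsey's theorem is proved in its infinite form and transferred to `[N]` by compactness.
-/

open Finset Filter

def IsMonochromaticOn {ι C : Type*} (f : Finset ι → C) (r : ℕ) (S : Set ι) (c : C) : Prop :=
  ∀ t : Finset ι, ↑t ⊆ S → #t = r → f t = c

section Ramsey

variable {C : Type*}

theorem exists_strictMono_isMonochromaticOn_insert {r : ℕ}
    (ih : ∀ (g : Finset ℕ → C) {A : Set ℕ}, A.Infinite →
      ∃ S ⊆ A, S.Infinite ∧ ∃ c, IsMonochromaticOn g r S c)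
    (f : Finset ℕ → C) {A : Set ℕ} (hA : A.Infinite) :
    ∃ (a : ℕ → ℕ) (col : ℕ → C), StrictMono a ∧ (∀ k, a k ∈ A) ∧
      ∀ k, IsMonochromaticOn (fun t => f (insert (a k) t)) r (a '' Set.Ioi k) (col k) := by
  have : Nonempty C := ⟨f ∅⟩
  have step : ∀ A : Set ℕ, A.Infinite → ∃ x ∈ A, ∃ S ⊆ A, S.Infinite ∧ (∀ y ∈ S, x < y) ∧
      ∃ c, IsMonochromaticOn (fun t => f (insert x t)) r S c := by
    intro A hA
    obtain ⟨x, hx⟩ := hA.nonempty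
    obtain ⟨S, hS, hS_inf, c, hc⟩ :=
      ih (fun t => f (insert x t)) (hA.sdiff (Set.finite_Iic x))
    exact ⟨x, hx, S, hS.trans Set.sdiff_subset, hS_inf, fun y hy => not_le.1 (hS hy).2, c, hc⟩
  choose! head hhead tail htail_sub htail_inf htail_gt col hcol using step
  set chain : ℕ → Set ℕ := fun k => tail^[k] A
  have chain_succ (k : ℕ) : chain (k + 1) = tail (chain k) := Function.iterate_succ_apply' ..
  have chain_inf (k : ℕ) : (chain k).Infinite := by
    induction k with
    | zero => exact hA
    | succ k ih => rw [chain_succ]; exact htail_inf _ ih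
  have chain_anti : Antitone chain :=
    antitone_nat_of_succ_le fun k => chain_succ k ▸ htail_sub _ (chain_inf k)
  refine ⟨fun k => head (chain k), fun k => col (chain k), strictMono_nat_of_lt_succ fun k => ?_,
    fun k => chain_anti (Nat.zero_le k) (hhead _ (chain_inf k)),
    fun k t ht hcard => hcol _ (chain_inf k) t (ht.trans ?_) hcard⟩
  · exact htail_gt _ (chain_inf k) _ (chain_succ k ▸ hhead _ (chain_inf (k + 1)))
  · rintro _ ⟨j, hj, rfl⟩
    exact chain_succ k ▸ chain_anti (Nat.succ_le_of_lt hj) (hhead _ (chain_inf j))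

theorem Set.Infinite.exists_isMonochromaticOn [Finite C] (r : ℕ) (f : Finset ℕ → C)
    {A : Set ℕ} (hA : A.Infinite) : ∃ S ⊆ A, S.Infinite ∧ ∃ c, IsMonochromaticOn f r S c := by
  induction r generalizing f A with
  | zero => exact ⟨A, subset_rfl, hA, f ∅, fun t _ ht => by rw [Finset.card_eq_zero.1 ht]⟩
  | succ r ih =>
    obtain ⟨a, col, ha, haA, hcol⟩ :=
      exists_strictMono_isMonochromaticOn_insert ih f hA
    obtain ⟨c, hc⟩ := Finite.exists_infinite_fiber col
    refine ⟨a '' (col ⁻¹' {c}), ?_, (Set.infinite_coe_iff.1 hc).image ha.injective.injOn, c,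
      fun t ht hcard => ?_⟩
    · rintro _ ⟨k, -, rfl⟩
      exact haA k
    have hne : t.Nonempty := card_pos.1 (by omega)
    obtain ⟨k, hk, hmin⟩ := ht (t.min'_mem hne)
    have hrest : ↑(t.erase (a k)) ⊆ a '' Set.Ioi k := by
      intro y hy
      obtain ⟨hyk, hyt⟩ := mem_erase.1 hy
      obtain ⟨j, -, rfl⟩ := ht hyt
      exact ⟨j, ha.lt_iff_lt.1 (lt_of_le_of_ne (hmin ▸ t.min'_le _ hyt) (Ne.symm hyk)), rfl⟩
    have hkt : a k ∈ t := hmin ▸ t.min'_mem hne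
    rw [← insert_erase hkt]
    exact (hcol k _ hrest (by rw [card_erase_of_mem hkt, hcard]; rfl)).trans hk

theorem exists_isMonochromaticOn_finset (C : Type*) [Finite C] (r M : ℕ) :
    ∃ N, ∀ f : Finset (Fin N) → C,
      ∃ W : Finset (Fin N), #W = M ∧ ∃ c, IsMonochromaticOn f r W c := by
  -- compactness: along a nonprincipal ultrafilter, counterexamples on `[N]` converge to a
  -- colouring of `ℕ`, which infinite Ramsey refutes
  by_contra! h
  choose F hF using h
  let restrict (N : ℕ) (t : Finset ℕ) : Finset (Fin N) := t.preimage Fin.val Fin.val_injective.injOn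
  have hlim (t : Finset ℕ) : ∃ c, ∀ᶠ N in hyperfilter ℕ, F N (restrict N t) = c := by
    obtain ⟨c, hc⟩ := ((hyperfilter ℕ).map fun N => F N (restrict N t)).eq_pure_of_finite
    have hc' : {c} ∈ (hyperfilter ℕ).map fun N => F N (restrict N t) := by
      rw [hc]
      exact Ultrafilter.mem_pure.2 rfl
    exact ⟨c, Ultrafilter.mem_map.1 hc'⟩
  choose lim hlim using hlim
  obtain ⟨S, -, hS, c, hc⟩ := Set.infinite_univ.exists_isMonochromaticOn r lim
  obtain ⟨t₀, ht₀S, ht₀⟩ := hS.exists_subset_card_eq M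
  have h_lim : ∀ᶠ N in hyperfilter ℕ, ∀ t ∈ t₀.powersetCard r, F N (restrict N t) = lim t :=
    (eventually_all_finset _).2 fun t _ => hlim t
  have h_lt : ∀ᶠ N in hyperfilter ℕ, ∀ x ∈ t₀, x < N :=
    Nat.hyperfilter_le_atTop ((eventually_all_finset t₀).2 fun x _ => eventually_gt_atTop x)
  obtain ⟨N, hN_lim, hN_lt⟩ := (h_lim.and h_lt).exists
  refine hF N (t₀.attachFin hN_lt) (by rw [card_attachFin, ht₀]) c fun t ht hcard => ?_
  have ht_sub : t.map Fin.valEmbedding ⊆ t₀ := by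
    rw [← map_valEmbedding_attachFin hN_lt]
    exact map_subset_map.2 (coe_subset.1 ht)
  have hcard' : #(t.map Fin.valEmbedding) = r := by rw [card_map, hcard]
  rw [← preimage_map Fin.valEmbedding t]
  exact (hN_lim _ (mem_powersetCard.2 ⟨ht_sub, hcard'⟩)).trans
    (hc _ ((coe_subset.2 ht_sub).trans ht₀S) hcard')

end Ramsey

namespace Finset

variable {ι : Type*} [LinearOrder ι] {R s t : Finset ι} {a b : ι}

def rank (R : Finset ι) (a : ι) : ℕ := #{x ∈ R | x < a}

theorem rank_lt_rank (ha : a ∈ R) (hab : a < b) : R.rank a < R.rank b :=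
  card_lt_card <| (ssubset_iff_of_subset fun x hx => by
    simp only [mem_filter] at hx ⊢; exact ⟨hx.1, hx.2.trans hab⟩).2
    ⟨a, by simp [ha, hab]⟩

theorem strictMonoOn_rank : StrictMonoOn R.rank R := fun _ ha _ _ hab => rank_lt_rank ha hab

theorem rank_lt_rank_iff (ha : a ∈ R) (hb : b ∈ R) : R.rank a < R.rank b ↔ a < b :=
  strictMonoOn_rank.lt_iff_lt ha hb

theorem rank_lt_card (ha : a ∈ R) : R.rank a < #R :=
  card_lt_card <| filter_ssubset.2 ⟨a, ha, lt_irrefl a⟩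

theorem exists_rank_eq {k : ℕ} (hk : k < #R) : ∃ a ∈ R, R.rank a = k := by
  obtain ⟨a, ha, hak⟩ := surj_on_of_inj_on_of_card_le (t := range #R) (fun a _ => R.rank a)
    (fun _ ha => mem_range.2 (rank_lt_card ha))
    (fun _ _ ha hb h => strictMonoOn_rank.injOn ha hb h) (by rw [card_range]) k (mem_range.2 hk)
  exact ⟨a, ha, hak.symm⟩

theorem card_filter_rank_mem {J : Finset ℕ} (hJ : J ⊆ range #R) :
    #{x ∈ R | R.rank x ∈ J} = #J := by
  refine card_nbij R.rank (fun x hx => (mem_filter.1 hx).2)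
    (strictMonoOn_rank.injOn.mono (filter_subset _ R)) fun k hk => ?_
  obtain ⟨a, ha, rfl⟩ := exists_rank_eq (mem_range.1 (hJ hk))
  exact ⟨a, mem_filter.2 ⟨ha, hk⟩, rfl⟩

theorem rank_union_of_forall_lt (hs : ∀ x ∈ s, x < a) (ht : ∀ y ∈ t, a ≤ y) :
    (s ∪ t).rank a = #s := by
  rw [rank, filter_union, filter_true_of_mem hs,
    filter_false_of_mem fun y hy => not_lt.2 (ht y hy), union_empty]

theorem card_union_of_forall_lt (h : ∀ x ∈ s, ∀ y ∈ t, x < y) : #(s ∪ t) = #s + #t :=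
  card_union_of_disjoint <| disjoint_left.2 fun x hs ht => lt_irrefl x (h x hs x ht)

theorem exists_rank_eq_rank_eq (hab : a < b) {G₁ G₂ G₃ : Finset ι} (h₁ : ∀ x ∈ G₁, x < a)
    (h₂ : ∀ x ∈ G₂, a < x ∧ x < b) (h₃ : ∀ x ∈ G₃, b < x) {i j m : ℕ} (hij : i < j) (hjm : j < m)
    (hG₁ : i ≤ #G₁) (hG₂ : j - i - 1 ≤ #G₂) (hG₃ : m - 1 - j ≤ #G₃) :
    ∃ R ⊆ G₁ ∪ insert a G₂ ∪ insert b G₃, #R = m ∧ a ∈ R ∧ b ∈ R ∧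
      R.rank a = i ∧ R.rank b = j := by
  obtain ⟨S₁, hS₁, hS₁_card⟩ := exists_subset_card_eq hG₁
  obtain ⟨S₂, hS₂, hS₂_card⟩ := exists_subset_card_eq hG₂
  obtain ⟨S₃, hS₃, hS₃_card⟩ := exists_subset_card_eq hG₃
  have hS₁a (x) (hx : x ∈ S₁) : x < a := h₁ x (hS₁ hx)
  have hS₂ab (x) (hx : x ∈ S₂) : a < x ∧ x < b := h₂ x (hS₂ hx)
  have hS₃b (x) (hx : x ∈ S₃) : b < x := h₃ x (hS₃ hx)
  have haS₂ : a ∉ S₂ := fun h => lt_irrefl a (hS₂ab a h).1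
  have hbS₃ : b ∉ S₃ := fun h => lt_irrefl b (hS₃b b h)
  have hL_lt (x) (hx : x ∈ S₁ ∪ insert a S₂) : x < b := by
    rcases mem_union.1 hx with hx | hx
    · exact (hS₁a x hx).trans hab
    · rcases mem_insert.1 hx with rfl | hx
      exacts [hab, (hS₂ab x hx).2]
  have hL_card : #(S₁ ∪ insert a S₂) = j := by
    rw [card_union_of_forall_lt fun x hx y hy => ?_, card_insert_of_notMem haS₂]
    · omega
    · rcases mem_insert.1 hy with rfl | hy
      exacts [hS₁a x hx, (hS₁a x hx).trans (hS₂ab y hy).1]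
  have hb_le (y) (hy : y ∈ insert b S₃) : b ≤ y := by
    rcases mem_insert.1 hy with rfl | hy
    exacts [le_rfl, (hS₃b y hy).le]
  refine ⟨S₁ ∪ insert a S₂ ∪ insert b S₃, ?_, ?_, by simp, by simp, ?_, ?_⟩
  · gcongr
  · rw [card_union_of_forall_lt fun x hx y hy => (hL_lt x hx).trans_le (hb_le y hy),
      hL_card, card_insert_of_notMem hbS₃]
    omega
  · rw [union_assoc, rank_union_of_forall_lt hS₁a, hS₁_card]
    intro y hy
    simp only [mem_union, mem_insert] at hy
    rcases hy with (rfl | hy) | rfl | hy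
    exacts [le_rfl, (hS₂ab y hy).1.le, hab.le, (hab.trans (hS₃b y hy)).le]
  · rw [rank_union_of_forall_lt hL_lt hb_le, hL_card]

theorem exists_rank_eq_rank_eq_of_card_le {W D : Finset ι} {m : ℕ} (hW : #W = 6 * m + 2)
    (haW : a ∈ W) (hbW : b ∈ W) (ha : W.rank a = 2 * m) (hb : W.rank b = 4 * m + 1)
    (hD : #D ≤ m) {i j : ℕ} (hij : i < j) (hjm : j < m) :
    ∃ R ⊆ W, #R = m ∧ a ∈ R ∧ b ∈ R ∧ R.rank a = i ∧ R.rank b = j ∧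
      ∀ c ∈ R, c ≠ a → c ≠ b → c ∉ D := by
  let block (J : Finset ℕ) : Finset ι := {x ∈ W | W.rank x ∈ J} \ D
  have mem_block {J x} (hx : x ∈ block J) : x ∈ W ∧ W.rank x ∈ J ∧ x ∉ D := by
    simp only [block, mem_sdiff, mem_filter] at hx
    exact ⟨hx.1.1, hx.1.2, hx.2⟩
  have card_block (J : Finset ℕ) (hJ : ∀ k ∈ J, k < 6 * m + 2) (hJ_card : #J = 2 * m) :
      m ≤ #(block J) :=
    (le_card_sdiff D _).trans' <| by
      rw [card_filter_rank_mem fun k hk => hW ▸ mem_range.2 (hJ k hk)]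
      omega
  obtain ⟨R, hR, hR_card, haR, hbR, hRa, hRb⟩ := exists_rank_eq_rank_eq
    ((rank_lt_rank_iff haW hbW).1 (by omega))
    (G₁ := block (Iio (2 * m))) (G₂ := block (Ioo (2 * m) (4 * m + 1)))
    (G₃ := block (Ioo (4 * m + 1) (6 * m + 2)))
    (fun x hx => by
      obtain ⟨hxW, hx, -⟩ := mem_block hx
      exact (rank_lt_rank_iff hxW haW).1 (ha ▸ mem_Iio.1 hx))
    (fun x hx => by
      obtain ⟨hxW, hx, -⟩ := mem_block hx
      exact ⟨(rank_lt_rank_iff haW hxW).1 (ha ▸ (mem_Ioo.1 hx).1),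
        (rank_lt_rank_iff hxW hbW).1 (hb ▸ (mem_Ioo.1 hx).2)⟩)
    (fun x hx => by
      obtain ⟨hxW, hx, -⟩ := mem_block hx
      exact (rank_lt_rank_iff hbW hxW).1 (hb ▸ (mem_Ioo.1 hx).1))
    hij hjm
    ((card_block _ (fun k hk => by simp at hk; omega) (by simp)).trans' (by omega))
    ((card_block _ (fun k hk => by simp at hk; omega) (by simp; omega)).trans' (by omega))
    ((card_block _ (fun k hk => by simp at hk; omega) (by simp; omega)).trans' (by omega))
  have hR_block {c} (hc : c ∈ R) (hca : c ≠ a) (hcb : c ≠ b) : c ∈ W ∧ c ∉ D := by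
    have := hR hc
    simp only [mem_union, mem_insert, hca, hcb, false_or] at this
    rcases this with (h | h) | h <;> exact ⟨(mem_block h).1, (mem_block h).2.2⟩
  refine ⟨R, fun c hc => ?_, hR_card, haR, hbR, hRa, hRb,
    fun c hc hca hcb => (hR_block hc hca hcb).2⟩
  by_cases hca : c = a; · exact hca ▸ haW
  by_cases hcb : c = b; · exact hcb ▸ hbW
  exact (hR_block hc hca hcb).1

end Finset

theorem exists_mem_mul_card_filter_le {α κ : Type*} [DecidableEq α] {V : Finset α}
    (hV : V.Nonempty) {T : Finset κ} {B : κ → Finset α} (k : ℕ)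
    (hBV : ∀ c ∈ T, B c ⊆ V) (hB : ∀ c ∈ T, k * #(B c) ≤ #V) :
    ∃ v ∈ V, k * #{c ∈ T | v ∈ B c} ≤ #T := by
  refine exists_le_of_sum_le hV ?_
  calc ∑ v ∈ V, k * #{c ∈ T | v ∈ B c}
      = ∑ c ∈ T, k * #{v ∈ V | v ∈ B c} := by
        rw [← mul_sum, ← mul_sum]
        exact congrArg (k * ·) (sum_card_bipartiteAbove_eq_sum_card_bipartiteBelow _)
    _ = ∑ c ∈ T, k * #(B c) := sum_congr rfl fun c hc => by
        rw [filter_mem_eq_inter, inter_eq_right.2 (hBV c hc)]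
    _ ≤ ∑ _c ∈ T, #V := sum_le_sum hB
    _ = ∑ _v ∈ V, #T := by rw [sum_const, sum_const, smul_eq_mul, smul_eq_mul, mul_comm]

section ReducedHypergraph

variable {ι α : Type*} (Vs : ι → ι → Finset α) (B : ι → ι → ι → Finset α)

def IsGoodVertex (R : Finset ι) (a b : ι) (x : α) : Prop :=
  x ∈ Vs a b ∧ ∀ c ∈ R, c ≠ a → c ≠ b → x ∉ B a b c

variable {Vs B} in
theorem IsGoodVertex.symm (hVs : ∀ a b, Vs a b = Vs b a) (hB : ∀ a b c, B a b c = B b a c)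
    {R : Finset ι} {a b : ι} {x : α} (h : IsGoodVertex Vs B R a b x) :
    IsGoodVertex Vs B R b a x :=
  ⟨hVs a b ▸ h.1, fun c hc hcb hca => hB a b c ▸ h.2 c hc hca hcb⟩

variable [LinearOrder ι]

def goodRankPairs (m : ℕ) (R : Finset ι) : Set (Fin m × Fin m) :=
  {p | ∃ a ∈ R, ∃ b ∈ R, R.rank a = p.1 ∧ R.rank b = p.2 ∧ ∃ x, IsGoodVertex Vs B R a b x}

theorem exists_mem_goodRankPairs (hVne : ∀ a b, a ≠ b → (Vs a b).Nonempty)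
    (hBsub : ∀ a b c, a ≠ b → c ≠ a → c ≠ b → B a b c ⊆ Vs a b)
    (hBcard : ∀ a b c, a ≠ b → c ≠ a → c ≠ b → 10 * #(B a b c) ≤ #(Vs a b))
    {m : ℕ} {W : Finset ι} (hW : #W = 6 * m + 2) {i j : Fin m} (hij : i < j) :
    ∃ R ⊆ W, #R = m ∧ (i, j) ∈ goodRankPairs Vs B m R := by
  classical
  obtain ⟨a, haW, ha⟩ := exists_rank_eq (R := W) (k := 2 * m) (by omega)
  obtain ⟨b, hbW, hb⟩ := exists_rank_eq (R := W) (k := 4 * m + 1) (by omega)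
  have hab : a < b := (rank_lt_rank_iff haW hbW).1 (by omega)
  set T := (W.erase b).erase a
  have hT : #T = 6 * m := by
    rw [card_erase_of_mem (mem_erase.2 ⟨hab.ne, haW⟩), card_erase_of_mem hbW, hW]; rfl
  have hTab {c} (hc : c ∈ T) : c ≠ a ∧ c ≠ b :=
    ⟨ne_of_mem_erase hc, ne_of_mem_erase (mem_of_mem_erase hc)⟩
  obtain ⟨v, hv, hfew⟩ := exists_mem_mul_card_filter_le (hVne a b hab.ne) (T := T) (B := B a b) 10
    (fun c hc => hBsub a b c hab.ne (hTab hc).1 (hTab hc).2)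
    (fun c hc => hBcard a b c hab.ne (hTab hc).1 (hTab hc).2)
  obtain ⟨R, hRW, hR, haR, hbR, hRa, hRb, hRD⟩ := exists_rank_eq_rank_eq_of_card_le hW haW hbW ha hb
    (D := {c ∈ T | v ∈ B a b c}) (by omega) hij j.2
  refine ⟨R, hRW, hR, a, haR, b, hbR, hRa, hRb, v, hv, fun c hc hca hcb hvc => hRD c hc hca hcb ?_⟩
  exact mem_filter.2 ⟨mem_erase.2 ⟨hca, mem_erase.2 ⟨hcb, hRW hc⟩⟩, hvc⟩

theorem exists_isGoodVertex_of_lt {m : ℕ} {R : Finset ι} (hR : #R = m)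
    (hgood : ∀ i j : Fin m, i < j → (i, j) ∈ goodRankPairs Vs B m R)
    {a b : ι} (ha : a ∈ R) (hb : b ∈ R) (hab : a < b) : ∃ x, IsGoodVertex Vs B R a b x := by
  obtain ⟨a', ha', b', hb', hra, hrb, hx⟩ := hgood ⟨R.rank a, hR ▸ rank_lt_card ha⟩
    ⟨R.rank b, hR ▸ rank_lt_card hb⟩ (Fin.mk_lt_mk.2 (rank_lt_rank ha hab))
  rwa [strictMonoOn_rank.injOn ha' ha hra, strictMonoOn_rank.injOn hb' hb hrb] at hx

end ReducedHypergraph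

theorem exists_symmetric_choice {ι α : Type*} [LinearOrder ι] [Nonempty α] {P : ι → ι → α → Prop}
    (hP : ∀ a b x, P a b x → P b a x) {s : Set ι} (h : ∀ a ∈ s, ∀ b ∈ s, a < b → ∃ x, P a b x) :
    ∃ v : ι → ι → α, (∀ a b, v a b = v b a) ∧ ∀ a ∈ s, ∀ b ∈ s, a ≠ b → P a b (v a b) := by
  choose! pick hpick using h
  refine ⟨fun a b => pick (min a b) (max a b), fun a b => by simp only [min_comm a b, max_comm a b],
    fun a ha b hb hab => ?_⟩
  rcases hab.lt_or_gt with hab | hab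
  · simpa [min_eq_left hab.le, max_eq_right hab.le] using hpick a ha b hb hab
  · simpa [min_eq_right hab.le, max_eq_left hab.le] using hP _ _ _ (hpick b hb a ha hab)

/-- For every `m` there exists `n` such that: given an `n`-reduced hypergraph with
vertex classes `V_{αβ}` and, for each triple of distinct indices `α, β, γ`, a
"bad" set `B_{αβ}^γ ⊆ V_{αβ}` of size at most `0.1|V_{αβ}|`, there is a set `U`
of `m` indices and a choice of a vertex `v_{αβ} ∈ V_{αβ}` for each pair
`α, β ∈ U` avoiding all the sets `B_{αβ}^γ` with `γ ∈ U`. -/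
theorem stmt13 (m : ℕ) :
    ∃ n : ℕ, ∀ (α : Type) (Vs : Fin n → Fin n → Finset α)
      (_ : ∀ a b, Vs a b = Vs b a)
      (_ : ∀ a b, a ≠ b → (Vs a b).Nonempty)
      (B : Fin n → Fin n → Fin n → Finset α)
      (_ : ∀ a b c, B a b c = B b a c)
      (_ : ∀ a b c, a ≠ b → c ≠ a → c ≠ b → B a b c ⊆ Vs a b)
      (_ : ∀ a b c, a ≠ b → c ≠ a → c ≠ b →
        ((B a b c).card : ℚ) ≤ (1 / 10) * ((Vs a b).card : ℚ)),
      ∃ U : Finset (Fin n), U.card = m ∧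
        ∃ v : Fin n → Fin n → α, (∀ a b, v a b = v b a) ∧
          ∀ a ∈ U, ∀ b ∈ U, a ≠ b → v a b ∈ Vs a b ∧
            ∀ c ∈ U, c ≠ a → c ≠ b → v a b ∉ B a b c := by
  obtain ⟨n, hn⟩ := exists_isMonochromaticOn_finset (Set (Fin m × Fin m)) m (6 * m + 2)
  refine ⟨n, fun α Vs hVs hVne B hB hBsub hBcard => ?_⟩
  have hBcard' (a b c : Fin n) (hab : a ≠ b) (hca : c ≠ a) (hcb : c ≠ b) :
      10 * #(B a b c) ≤ #(Vs a b) := by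
    have := hBcard a b c hab hca hcb
    exact_mod_cast (by push_cast; linarith : ((10 * #(B a b c) : ℕ) : ℚ) ≤ #(Vs a b))
  obtain ⟨W, hW, pairs, hpairs⟩ := hn (goodRankPairs Vs B m)
  obtain ⟨U, hUW, hU⟩ := exists_subset_card_eq (show m ≤ #W by omega)
  have hU_pairs (i j : Fin m) (hij : i < j) : (i, j) ∈ goodRankPairs Vs B m U := by
    obtain ⟨R, hRW, hR, hijR⟩ := exists_mem_goodRankPairs Vs B hVne hBsub hBcard' hW hij
    rwa [hpairs R (coe_subset.2 hRW) hR, ← hpairs U (coe_subset.2 hUW) hU] at hijR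
  obtain ⟨a, -, b, -, hab⟩ := one_lt_card.1 (by omega : 1 < #W)
  have : Nonempty α := ⟨(hVne a b hab).choose⟩
  obtain ⟨v, hv_symm, hv⟩ := exists_symmetric_choice (P := IsGoodVertex Vs B U)
    (fun _ _ _ h => h.symm hVs hB) (s := U)
    fun a ha b hb hab => exists_isGoodVertex_of_lt Vs B hU hU_pairs ha hb hab
  exact ⟨U, hU, v, hv_symm, hv⟩
end

section
/- Let $F$ be a 3-graph and suppose there exists a linear order $\preceq$ on $V(F)$ and a map $\psi : \binom{V(F)}{2} \to F_{\{a,b\}}$ (the free group on two generators $a, b$) such that for every edge $uvw \in E(F)$ with $u \prec v \prec w$, $(\psi(uv), \psi(uw), \psi(vw)) = (x, xa, xb)$ for some $x \in F_{\{a,b\}}$. Then $F$ is min-layered. -/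
/-- A set `A ⊆ ℕ³` is min-degenerate if the three entries of each element are
pairwise distinct, and any entry shared between two distinct triples is the
minimum of at least one of them. -/
def MinDegenerate (A : Set (ℕ × ℕ × ℕ)) : Prop :=
  (∀ t ∈ A, t.1 ≠ t.2.1 ∧ t.1 ≠ t.2.2 ∧ t.2.1 ≠ t.2.2) ∧
  ∀ t ∈ A, ∀ s ∈ A, t ≠ s → ∀ x : ℕ,
    (x = t.1 ∨ x = t.2.1 ∨ x = t.2.2) → (x = s.1 ∨ x = s.2.1 ∨ x = s.2.2) →
    x = min t.1 (min t.2.1 t.2.2) ∨ x = min s.1 (min s.2.1 s.2.2)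

/-- A 3-graph `E` is min-layered: there is a linear order (an injection `f` into
`ℕ`) and a symmetric coloring `φ` of pairs by naturals such that the set of
triples `(φ u v, φ u w, φ v w)` over edges `{u,v,w}` with `u ≺ v ≺ w` is
min-degenerate. -/
def MinLayered {V : Type*} [DecidableEq V] (E : Set (Finset V)) : Prop :=
  ∃ (f : V → ℕ) (φ : V → V → ℕ), Function.Injective f ∧ (∀ u v, φ u v = φ v u) ∧
    MinDegenerate {t | ∃ u v w : V, ({u, v, w} : Finset V) ∈ E ∧
      f u < f v ∧ f v < f w ∧ t = (φ u v, φ u w, φ v w)}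

/-! Code each element of a free group on finitely many generators by a natural number, injectively
and strictly increasing in the length of the reduced word (bijective base-`k` numeration of that
word), and colour the pair `uv` by the code of `ψ(uv)`. In a triangle `{x, xa, xb}` the reduced
lengths are `ℓ, ℓ+1, ℓ+1` or, up to order, `ℓ, ℓ-1, ℓ+1`, so it has a strictly shortest element,
and every other element `z` of the triangle determines `x`: it is `z a⁻¹` or `z b⁻¹` if the
reduced word of `z` ends in `a` or `b`, and `z` itself otherwise. So an element shared by two
distinct triangles is the shortest element of one of them. -/

theorem MinDegenerate.mono {A B : Set (ℕ × ℕ × ℕ)} (hB : MinDegenerate B) (hAB : A ⊆ B) :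
    MinDegenerate A :=
  ⟨fun t ht => hB.1 t (hAB ht), fun t ht s hs => hB.2 t (hAB ht) s (hAB hs)⟩

namespace FreeGroup

variable {α : Type*} [DecidableEq α] {x : FreeGroup α} {a b : α} {r : FreeGroup α → ℕ}

theorem toWord_mul_of_of_getLast?_ne (h : x.toWord.getLast? ≠ some (a, false)) :
    (x * of a).toWord = x.toWord ++ [(a, true)] := by
  rw [toWord_mul, toWord_of, IsReduced.reduce_eq]
  refine List.isChain_append.2 ⟨isReduced_toWord, IsReduced.singleton, ?_⟩
  rintro ⟨c, v⟩ hlast _ hhead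
  obtain rfl : _ = (a, true) := by simpa using hhead.symm
  rintro (rfl : c = a)
  cases v
  · exact absurd hlast h
  · rfl

theorem norm_mul_of_of_getLast?_ne (h : x.toWord.getLast? ≠ some (a, false)) :
    norm (x * of a) = norm x + 1 := by
  simp [norm, toWord_mul_of_of_getLast?_ne h]

theorem norm_mul_of_add_one_of_getLast?_eq (h : x.toWord.getLast? = some (a, false)) :
    norm (x * of a) + 1 = norm x := by
  obtain ⟨w, hw⟩ := List.getLast?_eq_some_iff.1 h
  have hx : x * of a = mk w := by
    rw [← mk_toWord (x := x), hw, ← mul_mk, show mk [(a, false)] = (of a)⁻¹ from rfl,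
      inv_mul_cancel_right]
  have hred : IsReduced w := isReduced_toWord.infix (hw ▸ List.infix_append [] w _)
  simp [norm, hx, toWord_mk, hred.reduce_eq, hw]

def dropTrailingOf (z : FreeGroup α) : FreeGroup α :=
  match z.toWord.getLast? with
  | some (c, true) => z * (of c)⁻¹
  | _ => z

theorem dropTrailingOf_mul_of (h : x.toWord.getLast? ≠ some (a, false)) :
    dropTrailingOf (x * of a) = x := by
  simp [dropTrailingOf, toWord_mul_of_of_getLast?_ne h]

theorem dropTrailingOf_of_forall_getLast?_ne (h : ∀ c, x.toWord.getLast? ≠ some (c, true)) :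
    dropTrailingOf x = x := by
  unfold dropTrailingOf
  split
  · exact absurd ‹_› (h _)
  · rfl

theorem eq_dropTrailingOf_or_norm_lt_mul_of (x : FreeGroup α) (a b : α) :
    x = dropTrailingOf x ∨ norm x < norm (x * of a) ∧ norm x < norm (x * of b) := by
  by_cases h : ∃ c, x.toWord.getLast? = some (c, true)
  · obtain ⟨c, hc⟩ := h
    right
    rw [norm_mul_of_of_getLast?_ne (by simp [hc]), norm_mul_of_of_getLast?_ne (by simp [hc])]
    omega
  · exact .inl (dropTrailingOf_of_forall_getLast?_ne (not_exists.1 h)).symm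

theorem eq_dropTrailingOf_mul_of_or_norm_mul_of_lt (x : FreeGroup α) (hab : a ≠ b) :
    x = dropTrailingOf (x * of a) ∨
      norm (x * of a) < norm x ∧ norm (x * of a) < norm (x * of b) := by
  by_cases h : x.toWord.getLast? = some (a, false)
  · right
    have := norm_mul_of_add_one_of_getLast?_eq h
    rw [norm_mul_of_of_getLast?_ne (a := b) (by rw [h]; simpa using hab)]
    omega
  · exact .inl (dropTrailingOf_mul_of h).symm

theorem exists_injective_lt_of_norm_lt [Finite α] :
    ∃ r : FreeGroup α → ℕ, Function.Injective r ∧ ∀ x y, norm x < norm y → r x < r y := by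
  set k := Nat.card (α × Bool)
  let e := Finite.equivFin (α × Bool)
  -- nonzero digits below the base make `Nat.ofDigits` injective and monotone in the length
  let digits : FreeGroup α → List ℕ := fun x => x.toWord.map fun p => e p + 1
  have digit_lt : ∀ x, ∀ d ∈ digits x, d < k + 2 := by
    simp only [digits, List.mem_map]
    rintro x _ ⟨p, -, rfl⟩
    have := (e p).isLt
    omega
  have digit_ne_zero : ∀ x, ∀ d ∈ digits x, d ≠ 0 := by
    simp only [digits, List.mem_map]
    rintro x _ ⟨p, -, rfl⟩
    omega
  have length_digits : ∀ x, (digits x).length = norm x := fun x => by simp [digits, norm]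
  refine ⟨fun x => Nat.ofDigits (k + 2) (digits x), fun x y hxy => ?_, fun x y hxy => ?_⟩
  · have := congrArg (Nat.digits (k + 2)) hxy
    rw [Nat.digits_ofDigits _ (by omega) _ (digit_lt x)
        fun h => digit_ne_zero x _ (List.getLast_mem h),
      Nat.digits_ofDigits _ (by omega) _ (digit_lt y)
        fun h => digit_ne_zero y _ (List.getLast_mem h)] at this
    refine toWord_injective (List.map_injective_iff.2 ?_ this)
    intro p q hpq
    exact e.injective (Fin.ext (by simpa using hpq))
  · have hy : digits y ≠ [] := by
      rw [← List.length_pos_iff, length_digits]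
      omega
    have upper := Nat.ofDigits_lt_base_pow_length' (digit_lt x)
    have lower :=
      Nat.pow_length_le_mul_ofDigits (b := k) hy (digit_ne_zero y _ (List.getLast_mem hy))
    rw [length_digits] at upper lower
    refine Nat.lt_of_mul_lt_mul_left (a := k + 2) ?_
    calc (k + 2) * Nat.ofDigits (k + 2) (digits x) < (k + 2) ^ (norm x + 1) := by
          rw [pow_succ']
          exact Nat.mul_lt_mul_of_pos_left upper (by omega)
      _ ≤ (k + 2) ^ norm y := Nat.pow_le_pow_right (by omega) hxy
      _ ≤ _ := lower

theorem eq_dropTrailingOf_or_eq_min (hr : ∀ x y, norm x < norm y → r x < r y) (hab : a ≠ b)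
    {x z : FreeGroup α} (hz : z = x ∨ z = x * of a ∨ z = x * of b) :
    x = dropTrailingOf z ∨ r z = min (r x) (min (r (x * of a)) (r (x * of b))) := by
  rcases hz with rfl | rfl | rfl
  · refine (eq_dropTrailingOf_or_norm_lt_mul_of z a b).imp_right fun ⟨ha, hb⟩ => ?_
    have := hr _ _ ha
    have := hr _ _ hb
    omega
  · refine (eq_dropTrailingOf_mul_of_or_norm_mul_of_lt x hab).imp_right fun ⟨hx, hb⟩ => ?_
    have := hr _ _ hx
    have := hr _ _ hb
    omega
  · refine (eq_dropTrailingOf_mul_of_or_norm_mul_of_lt x hab.symm).imp_right fun ⟨hx, ha⟩ => ?_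
    have := hr _ _ hx
    have := hr _ _ ha
    omega

theorem minDegenerate_range (hr_inj : Function.Injective r)
    (hr : ∀ x y, norm x < norm y → r x < r y) (hab : a ≠ b) :
    MinDegenerate (Set.range fun x => (r x, r (x * of a), r (x * of b))) := by
  refine ⟨?_, ?_⟩
  · rintro _ ⟨x, rfl⟩
    refine ⟨hr_inj.ne ?_, hr_inj.ne ?_, hr_inj.ne ?_⟩
    · simp [of_ne_one]
    · simp [of_ne_one]
    · simpa using of_injective.ne hab
  · rintro _ ⟨x, rfl⟩ _ ⟨y, rfl⟩ hxy k hkx hky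
    have hxy : x ≠ y := by rintro rfl; exact hxy rfl
    obtain ⟨z, hzx, rfl⟩ : ∃ z, (z = x ∨ z = x * of a ∨ z = x * of b) ∧ k = r z := by
      rcases hkx with h | h | h <;> exact ⟨_, by simp, h⟩
    obtain ⟨z', hzy, hzz'⟩ : ∃ z', (z' = y ∨ z' = y * of a ∨ z' = y * of b) ∧ r z = r z' := by
      rcases hky with h | h | h <;> exact ⟨_, by simp, h⟩
    obtain rfl := hr_inj hzz'
    rcases eq_dropTrailingOf_or_eq_min hr hab hzx with hx | hx
    · rcases eq_dropTrailingOf_or_eq_min hr hab hzy with hy | hy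
      · exact absurd (hx.trans hy.symm) hxy
      · exact .inr hy
    · exact .inl hx

end FreeGroup

theorem stmt14_general {V : Type*} [DecidableEq V] (E : Set (Finset V))
    (h : ∃ (f : V → ℕ) (ψ : V → V → FreeGroup (Fin 2)),
      Function.Injective f ∧ (∀ u v, ψ u v = ψ v u) ∧
      ∀ u v w, ({u, v, w} : Finset V) ∈ E → f u < f v → f v < f w →
        ∃ x : FreeGroup (Fin 2), ψ u v = x ∧
          ψ u w = x * FreeGroup.of 0 ∧ ψ v w = x * FreeGroup.of 1) :
    MinLayered E := by
  obtain ⟨f, ψ, hf, hψ, hcol⟩ := h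
  obtain ⟨r, hr_inj, hr⟩ := FreeGroup.exists_injective_lt_of_norm_lt (α := Fin 2)
  refine ⟨f, fun u v => r (ψ u v), hf, fun u v => congrArg r (hψ u v),
    (FreeGroup.minDegenerate_range hr_inj hr (by decide : (0 : Fin 2) ≠ 1)).mono ?_⟩
  rintro _ ⟨u, v, w, he, huv, hvw, rfl⟩
  obtain ⟨x, h1, h2, h3⟩ := hcol u v w he huv hvw
  exact ⟨x, by simp only [h1, h2, h3]⟩

/-- If there is a linear order on `V(F)` and a map `ψ` from pairs to the free
group on two generators `a, b` such that every edge `uvw` (with `u ≺ v ≺ w`) is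
colored `(x, xa, xb)` for some `x`, then `F` is min-layered. -/
theorem stmt14 {V : Type*} [DecidableEq V] [Fintype V] (E : Set (Finset V))
    (h : ∃ (f : V → ℕ) (ψ : V → V → FreeGroup (Fin 2)),
      Function.Injective f ∧ (∀ u v, ψ u v = ψ v u) ∧
      ∀ u v w, ({u, v, w} : Finset V) ∈ E → f u < f v → f v < f w →
        ∃ x : FreeGroup (Fin 2), ψ u v = x ∧
          ψ u w = x * FreeGroup.of 0 ∧ ψ v w = x * FreeGroup.of 1) :
    MinLayered E :=
  stmt14_general E h
end

section
/- Let $F$ be a min-layered 3-graph and let $\mathcal{P} = (\mathcal{C}, \mathcal{A}')$ be a palette with positive minimum degree $\delta(\mathcal{P}) > 0$. Then $F$ admits $\mathcal{P}$. -/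
/-!
Colour the layer values rather than the pairs, `ψ uv := col (φ uv)`, and build `col : ℕ → γ` by
strong recursion. By min-degeneracy, a value `x` that is a non-minimal entry of some triple `t` of
the layering is so for exactly one `t`, and `x` takes its colour from a triple of `A'` extending the
colour already given to the smaller value `min t`; such a triple exists because every colour occurs
in every coordinate of `A'`.
-/

def CoordinatesSurjective {γ : Type*} (A' : Set (γ × γ × γ)) : Prop :=
  ∀ a : γ, (∃ b c, (a, b, c) ∈ A') ∧ (∃ b c, (b, a, c) ∈ A') ∧ (∃ b c, (b, c, a) ∈ A')

def EntriesDistinct {α : Type*} (t : α × α × α) : Prop :=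
  t.1 ≠ t.2.1 ∧ t.1 ≠ t.2.2 ∧ t.2.1 ≠ t.2.2

def IsEntry {α : Type*} (x : α) (t : α × α × α) : Prop :=
  x = t.1 ∨ x = t.2.1 ∨ x = t.2.2

def minEntry {α : Type*} [LinearOrder α] (t : α × α × α) : α :=
  min t.1 (min t.2.1 t.2.2)

theorem exists_fun_eq_triple {α β : Type*} [DecidableEq α] {x y z : α} (hxy : x ≠ y) (hxz : x ≠ z)
    (hyz : y ≠ z) (a b c : β) : ∃ g : α → β, g x = a ∧ g y = b ∧ g z = c :=
  ⟨fun w => if w = x then a else if w = y then b else c, by simp [hxy.symm, hxz.symm, hyz.symm]⟩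

theorem exists_extension {α γ : Type*} [DecidableEq α] {A' : Set (γ × γ × γ)}
    (hA' : CoordinatesSurjective A') {t : α × α × α} (ht : EntriesDistinct t) {m : α}
    (hm : IsEntry m t) (c : γ) :
    ∃ g : α → γ, g m = c ∧ (g t.1, g t.2.1, g t.2.2) ∈ A' := by
  obtain ⟨h12, h13, h23⟩ := ht
  rcases hm with hm | hm | hm
  · obtain ⟨b, d, hbd⟩ := (hA' c).1
    obtain ⟨g, h1, h2, h3⟩ := exists_fun_eq_triple h12 h13 h23 c b d
    exact ⟨g, by rw [hm, h1], by rwa [h1, h2, h3]⟩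
  · obtain ⟨b, d, hbd⟩ := (hA' c).2.1
    obtain ⟨g, h1, h2, h3⟩ := exists_fun_eq_triple h12 h13 h23 b c d
    exact ⟨g, by rw [hm, h2], by rwa [h1, h2, h3]⟩
  · obtain ⟨b, d, hbd⟩ := (hA' c).2.2
    obtain ⟨g, h1, h2, h3⟩ := exists_fun_eq_triple h12 h13 h23 b d c
    exact ⟨g, by rw [hm, h3], by rwa [h1, h2, h3]⟩

section MinEntry

variable {α : Type*} [LinearOrder α]

theorem minEntry_isEntry (t : α × α × α) : IsEntry (minEntry t) t := by
  unfold minEntry IsEntry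
  rcases min_choice t.1 (min t.2.1 t.2.2) with h | h
  · exact Or.inl h
  rw [h]
  exact Or.inr (min_choice t.2.1 t.2.2)

theorem minEntry_lt_of_isEntry {x : α} {t : α × α × α} (hx : IsEntry x t)
    (hxm : x ≠ minEntry t) : minEntry t < x := by
  refine lt_of_le_of_ne ?_ (Ne.symm hxm)
  rcases hx with rfl | rfl | rfl <;> simp [minEntry]

end MinEntry

section Extension

variable {α γ : Type*} [LinearOrder α] {A' : Set (γ × γ × γ)}

open Classical in
noncomputable def extension (hA' : CoordinatesSurjective A') (t : α × α × α) (c : γ) : α → γ :=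
  if ht : EntriesDistinct t then (exists_extension hA' ht (minEntry_isEntry t) c).choose
  else fun _ => c

theorem extension_spec (hA' : CoordinatesSurjective A') {t : α × α × α} (ht : EntriesDistinct t)
    (c : γ) : extension hA' t c (minEntry t) = c ∧
      (extension hA' t c t.1, extension hA' t c t.2.1, extension hA' t c t.2.2) ∈ A' := by
  rw [extension, dif_pos ht]
  exact (exists_extension hA' ht (minEntry_isEntry t) c).choose_spec

end Extension

section LayerColoring

variable {γ : Type*} [Nonempty γ] {A' : Set (γ × γ × γ)}

open Classical in
noncomputable def layerColoring (𝒜 : Set (ℕ × ℕ × ℕ)) (hA' : CoordinatesSurjective A') (x : ℕ) :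
    γ :=
  if h : ∃ t ∈ 𝒜, IsEntry x t ∧ x ≠ minEntry t then
    extension hA' h.choose (layerColoring 𝒜 hA' (minEntry h.choose)) x
  else Classical.arbitrary γ
termination_by x
decreasing_by exact minEntry_lt_of_isEntry h.choose_spec.2.1 h.choose_spec.2.2

variable {𝒜 : Set (ℕ × ℕ × ℕ)}

theorem layerColoring_eq_extension (hA' : CoordinatesSurjective A') (h𝒜 : MinDegenerate 𝒜)
    {t : ℕ × ℕ × ℕ} (ht : t ∈ 𝒜) {x : ℕ} (hx : IsEntry x t) :
    layerColoring 𝒜 hA' x = extension hA' t (layerColoring 𝒜 hA' (minEntry t)) x := by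
  by_cases hxm : x = minEntry t
  · rw [hxm, (extension_spec hA' (h𝒜.1 t ht) _).1]
  have h : ∃ s ∈ 𝒜, IsEntry x s ∧ x ≠ minEntry s := ⟨t, ht, hx, hxm⟩
  obtain ⟨hs, hxs, hxsm⟩ := h.choose_spec
  -- By min-degeneracy, `x` is a non-minimal entry of no other triple of `𝒜`.
  have hst : h.choose = t := by
    by_contra hne
    rcases h𝒜.2 t ht h.choose hs (Ne.symm hne) x hx hxs with h' | h'
    exacts [hxm h', hxsm h']
  rw [layerColoring, dif_pos h, hst]

theorem layerColoring_mem (hA' : CoordinatesSurjective A') (h𝒜 : MinDegenerate 𝒜)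
    {t : ℕ × ℕ × ℕ} (ht : t ∈ 𝒜) :
    (layerColoring 𝒜 hA' t.1, layerColoring 𝒜 hA' t.2.1, layerColoring 𝒜 hA' t.2.2) ∈ A' := by
  rw [layerColoring_eq_extension hA' h𝒜 ht (Or.inl rfl),
    layerColoring_eq_extension hA' h𝒜 ht (Or.inr (Or.inl rfl)),
    layerColoring_eq_extension hA' h𝒜 ht (Or.inr (Or.inr rfl))]
  exact (extension_spec hA' (h𝒜.1 t ht) _).2

theorem exists_coloring_of_minDegenerate (hA' : CoordinatesSurjective A')
    (h𝒜 : MinDegenerate 𝒜) :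
    ∃ col : ℕ → γ, ∀ t ∈ 𝒜, (col t.1, col t.2.1, col t.2.2) ∈ A' :=
  ⟨layerColoring 𝒜 hA', fun _ ht => layerColoring_mem hA' h𝒜 ht⟩

end LayerColoring

theorem stmt15_general {V γ : Type*} [DecidableEq V] [Nonempty γ]
    (E : Set (Finset V)) (hF : MinLayered E) (A' : Set (γ × γ × γ))
    (hδ : ∀ a : γ, (∃ b c, (a, b, c) ∈ A') ∧ (∃ b c, (b, a, c) ∈ A') ∧
      (∃ b c, (b, c, a) ∈ A')) :
    Admits E A' := by
  obtain ⟨f, φ, hf, hφ, h𝒜⟩ := hF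
  obtain ⟨col, hcol⟩ := exists_coloring_of_minDegenerate hδ h𝒜
  exact ⟨f, fun u v => col (φ u v), hf, fun u v => congrArg col (hφ u v),
    fun u v w he huv hvw => hcol _ ⟨u, v, w, he, huv, hvw, rfl⟩⟩

/-- A min-layered 3-graph admits every palette with positive minimum degree. -/
theorem stmt15 {V γ : Type*} [DecidableEq V] [Fintype V] [Fintype γ] [Nonempty γ]
    (E : Set (Finset V)) (hF : MinLayered E) (A' : Set (γ × γ × γ))
    (hδ : ∀ a : γ, (∃ b c, (a, b, c) ∈ A') ∧ (∃ b c, (b, a, c) ∈ A') ∧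
      (∃ b c, (b, c, a) ∈ A')) :
    Admits E A' :=
  stmt15_general E hF A' hδ
end

section
/- In the free group $F_{\{a,b\}}$ on generators $a, b$, consider the set $\mathcal{A}$ of all triples $(x, xa, xb)$ for $x \in F_{\{a,b\}}$. For every nonempty $x \in F_{\{a,b\}}$, among the three triples containing $x$, namely $(x, xa, xb)$, $(xa^{-1}, x, xa^{-1}b)$, $(xb^{-1}, xb^{-1}a, x)$, exactly one has the property that $x$ is not its minimal element with respect to word length (ties among equal lengths ordered so that shorter words are smaller; for triples all of whose entries have distinct lengths the claim is about the word-length minimum). Specifically: if the reduced word of $x$ ends in $a^{-1}$ or $b^{-1}$, the exceptional triple is $(x, xa, xb)$; if it ends in $a$, it is $(xa^{-1}, x, xa^{-1}b)$; if it ends in $b$, it is $(xb^{-1}, xb^{-1}a, x)$. -/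
/-!
Right multiplication of a reduced word by a letter either cancels its last letter (exactly when
the letter is the inverse of that last letter) or appends it. So in each of the three triples
the only entry that can be shorter than `x` is the one obtained by cancelling the last letter of
`x`: `xa` or `xb` when `x` ends in `a⁻¹` or `b⁻¹`, `xa⁻¹` when it ends in `a`, `xb⁻¹` when it ends
in `b`; the entries `xa⁻¹b` and `xb⁻¹a` are longer than `x` unless that cancellation happens.
-/

/-- The length of the reduced word of an element of the free group on two
generators. -/
def wlen (g : FreeGroup (Fin 2)) : ℕ := g.toWord.length

/-- `g` does not attain the (unique) minimum word length in the triple `t`: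
the minimum of the three word lengths in `t` is strictly smaller than `|g|`. -/
def NotMinIn (g : FreeGroup (Fin 2))
    (t : FreeGroup (Fin 2) × FreeGroup (Fin 2) × FreeGroup (Fin 2)) : Prop :=
  min (wlen t.1) (min (wlen t.2.1) (wlen t.2.2)) < wlen g

namespace FreeGroup

variable {α : Type*} [DecidableEq α] {x : FreeGroup α} {i j : α} {c : Bool}

theorem toWord_mul_mk_singleton (x : FreeGroup α) (p : α × Bool) :
    (x * mk [p]).toWord = reduce (x.toWord ++ [p]) := by
  rw [toWord_mul, toWord_mk, reduce_singleton]

theorem toWord_mul_mk_singleton_of_getLast?_eq (h : x.toWord.getLast? = some (i, !c)) :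
    (x * mk [(i, c)]).toWord = x.toWord.dropLast := by
  have hx : x.toWord.dropLast ++ [(i, !c)] = x.toWord := List.dropLast_append_getLast? _ h
  have hred : IsReduced x.toWord.dropLast :=
    isReduced_toWord.infix (List.dropLast_prefix _).isInfix
  rw [toWord_mul_mk_singleton]
  nth_rw 1 [← hx]
  rw [List.append_assoc, List.singleton_append,
    reduce.Step.eq (Red.Step.not_rev (L₂ := [])), List.append_nil, hred.reduce_eq]

theorem toWord_mul_mk_singleton_of_getLast?_ne (h : x.toWord.getLast? ≠ some (i, !c)) :
    (x * mk [(i, c)]).toWord = x.toWord ++ [(i, c)] := by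
  rw [toWord_mul_mk_singleton, IsReduced.reduce_eq]
  refine List.isChain_append.mpr ⟨isReduced_toWord, List.isChain_singleton _, ?_⟩
  rintro p hp q hq hpq
  obtain rfl : (i, c) = q := by simpa using hq
  by_contra hne
  exact h (hp.trans (congrArg some (Prod.ext hpq (Bool.eq_not.mpr hne))))

theorem norm_mul_mk_singleton_of_getLast?_eq (h : x.toWord.getLast? = some (i, !c)) :
    norm (x * mk [(i, c)]) + 1 = norm x := by
  have hne : x.toWord ≠ [] := by rintro h₀; simp [h₀] at h
  rw [norm, norm, toWord_mul_mk_singleton_of_getLast?_eq h, List.length_dropLast]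
  have := List.length_pos_iff.mpr hne
  omega

theorem norm_mul_mk_singleton_of_getLast?_ne (h : x.toWord.getLast? ≠ some (i, !c)) :
    norm (x * mk [(i, c)]) = norm x + 1 := by
  rw [norm, norm, toWord_mul_mk_singleton_of_getLast?_ne h, List.length_append,
    List.length_singleton]

theorem norm_mul_mk_singleton_lt_iff :
    norm (x * mk [(i, c)]) < norm x ↔ x.toWord.getLast? = some (i, !c) := by
  by_cases h : x.toWord.getLast? = some (i, !c)
  · have := norm_mul_mk_singleton_of_getLast?_eq h
    simp only [h, iff_true]; omega
  · have := norm_mul_mk_singleton_of_getLast?_ne h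
    simp only [h, iff_false]; omega

theorem norm_mul_mk_singleton_mul_mk_singleton {d : Bool}
    (h : x.toWord.getLast? ≠ some (i, !c)) (hjd : (j, d) ≠ (i, !c)) :
    norm (x * mk [(i, c)] * mk [(j, d)]) = norm x + 2 := by
  have hlast : (x * mk [(i, c)]).toWord.getLast? = some (i, c) := by
    simp [toWord_mul_mk_singleton_of_getLast?_ne h]
  have hne : (x * mk [(i, c)]).toWord.getLast? ≠ some (j, !d) := by
    rw [hlast]
    rintro ⟨⟩
    simp at hjd
  rw [norm_mul_mk_singleton_of_getLast?_ne hne, norm_mul_mk_singleton_of_getLast?_ne h]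

theorem norm_mul_of_lt_iff : norm (x * of i) < norm x ↔ x.toWord.getLast? = some (i, false) :=
  norm_mul_mk_singleton_lt_iff

theorem norm_mul_inv_of_lt_iff :
    norm (x * (of i)⁻¹) < norm x ↔ x.toWord.getLast? = some (i, true) :=
  norm_mul_mk_singleton_lt_iff

theorem getLast?_toWord_eq_of_norm_mul_inv_of_mul_of_lt (hij : i ≠ j)
    (h : norm (x * (of i)⁻¹ * of j) < norm x) : x.toWord.getLast? = some (i, true) := by
  by_contra hx
  have hlen : norm (x * mk [(i, false)] * mk [(j, true)]) = norm x + 2 :=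
    norm_mul_mk_singleton_mul_mk_singleton hx (by simp [hij.symm])
  change norm (x * mk [(i, false)] * mk [(j, true)]) < norm x at h
  omega

end FreeGroup

open FreeGroup

theorem wlen_eq_norm (g : FreeGroup (Fin 2)) : wlen g = g.norm := rfl

theorem notMinIn_iff {g p q r : FreeGroup (Fin 2)} :
    NotMinIn g (p, q, r) ↔ wlen p < wlen g ∨ wlen q < wlen g ∨ wlen r < wlen g := by
  simp only [NotMinIn, min_lt_iff]

theorem stmt16_general (x : FreeGroup (Fin 2))
    (a b : FreeGroup (Fin 2)) (ha : a = FreeGroup.of 0) (hb : b = FreeGroup.of 1) :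
    ((x.toWord.getLast? = some (0, false) ∨ x.toWord.getLast? = some (1, false)) →
      (NotMinIn x (x, x * a, x * b) ∧
        ¬ NotMinIn x (x * a⁻¹, x, x * a⁻¹ * b) ∧
        ¬ NotMinIn x (x * b⁻¹, x * b⁻¹ * a, x))) ∧
    (x.toWord.getLast? = some (0, true) →
      (¬ NotMinIn x (x, x * a, x * b) ∧
        NotMinIn x (x * a⁻¹, x, x * a⁻¹ * b) ∧
        ¬ NotMinIn x (x * b⁻¹, x * b⁻¹ * a, x))) ∧
    (x.toWord.getLast? = some (1, true) →
      (¬ NotMinIn x (x, x * a, x * b) ∧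
        ¬ NotMinIn x (x * a⁻¹, x, x * a⁻¹ * b) ∧
        NotMinIn x (x * b⁻¹, x * b⁻¹ * a, x))) := by
  subst ha hb
  have h₁ : NotMinIn x (x, x * of 0, x * of 1) ↔
      x.toWord.getLast? = some (0, false) ∨ x.toWord.getLast? = some (1, false) := by
    simp only [notMinIn_iff, wlen_eq_norm, lt_irrefl, false_or, norm_mul_of_lt_iff]
  have h₂ : NotMinIn x (x * (of 0)⁻¹, x, x * (of 0)⁻¹ * of 1) ↔
      x.toWord.getLast? = some (0, true) := by
    simp only [notMinIn_iff, wlen_eq_norm, lt_irrefl, false_or, norm_mul_inv_of_lt_iff]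
    exact or_iff_left_of_imp (getLast?_toWord_eq_of_norm_mul_inv_of_mul_of_lt (by decide))
  have h₃ : NotMinIn x (x * (of 1)⁻¹, x * (of 1)⁻¹ * of 0, x) ↔
      x.toWord.getLast? = some (1, true) := by
    simp only [notMinIn_iff, wlen_eq_norm, lt_irrefl, or_false, norm_mul_inv_of_lt_iff]
    exact or_iff_left_of_imp (getLast?_toWord_eq_of_norm_mul_inv_of_mul_of_lt (by decide))
  rw [h₁, h₂, h₃]
  generalize x.toWord.getLast? = w
  grind

/-- For every nonempty `x` in the free group on `a, b`, among the three triples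
`(x, xa, xb)`, `(xa⁻¹, x, xa⁻¹b)`, `(xb⁻¹, xb⁻¹a, x)` of the family
`{(z, za, zb)}`, exactly one has `x` not minimal with respect to word length,
determined by the last letter of `x`: the first if `x` ends in `a⁻¹` or `b⁻¹`,
the second if it ends in `a`, the third if it ends in `b`. -/
theorem stmt16 (x : FreeGroup (Fin 2)) (hx : x ≠ 1)
    (a b : FreeGroup (Fin 2)) (ha : a = FreeGroup.of 0) (hb : b = FreeGroup.of 1) :
    ((x.toWord.getLast? = some (0, false) ∨ x.toWord.getLast? = some (1, false)) →
      (NotMinIn x (x, x * a, x * b) ∧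
        ¬ NotMinIn x (x * a⁻¹, x, x * a⁻¹ * b) ∧
        ¬ NotMinIn x (x * b⁻¹, x * b⁻¹ * a, x))) ∧
    (x.toWord.getLast? = some (0, true) →
      (¬ NotMinIn x (x, x * a, x * b) ∧
        NotMinIn x (x * a⁻¹, x, x * a⁻¹ * b) ∧
        ¬ NotMinIn x (x * b⁻¹, x * b⁻¹ * a, x))) ∧
    (x.toWord.getLast? = some (1, true) →
      (¬ NotMinIn x (x, x * a, x * b) ∧
        ¬ NotMinIn x (x * a⁻¹, x, x * a⁻¹ * b) ∧
        NotMinIn x (x * b⁻¹, x * b⁻¹ * a, x))) :=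
  stmt16_general x a b ha hb
end

section
/- Let $F$ be a 3-graph admitting a max-layered structure: a linear order $\preceq$ on $V(F)$ and $\varphi : \binom{V(F)}{2} \to \mathbb{N}$ such that in the set $\mathcal{A} = \{(\varphi(uv), \varphi(uw), \varphi(vw)) : uvw \in E(F), u \prec v \prec w\}$, each triple has a unique maximal entry and distinct triples have distinct maxima. Then $F$ admits every palette $\mathcal{Q} = (\mathcal{C}, \mathcal{A}')$ with positive minimum codegree, i.e., such that for all $a, b \in \mathcal{C}$ each of the sets $\{c : (a,b,c) \in \mathcal{A}'\}$, $\{c : (a,c,b) \in \mathcal{A}'\}$, $\{c : (c,a,b) \in \mathcal{A}'\}$ is nonempty. -/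
/-- A set `A ⊆ ℕ³` is max-degenerate: each triple has a unique maximal entry, and
distinct triples have distinct maxima. -/
def MaxDegenerate (A : Set (ℕ × ℕ × ℕ)) : Prop :=
  (∀ t ∈ A,
    (t.2.1 < t.1 ∧ t.2.2 < t.1) ∨ (t.1 < t.2.1 ∧ t.2.2 < t.2.1) ∨
    (t.1 < t.2.2 ∧ t.2.1 < t.2.2)) ∧
  ∀ t ∈ A, ∀ s ∈ A, t ≠ s →
    max t.1 (max t.2.1 t.2.2) ≠ max s.1 (max s.2.1 s.2.2)

/-!
Color the values of `φ` greedily in increasing order. A value `n` is the maximum of at most one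
triple of the max-degenerate set, and the other two entries of that triple are smaller, hence
already colored; the positive-codegree condition for the position of the maximum then offers a
color for `n` completing the triple to an admissible one.
-/

namespace MaxDegenerate

variable {γ : Type*} (A : Set (ℕ × ℕ × ℕ)) (A' : Set (γ × γ × γ))

def AdmissibleAt (c : ℕ → γ) (n : ℕ) : Prop :=
  ∀ t ∈ A, max t.1 (max t.2.1 t.2.2) = n → (c t.1, c t.2.1, c t.2.2) ∈ A'

variable {A A'}

lemma admissibleAt_congr {c d : ℕ → γ} {n : ℕ} (hcd : ∀ m ≤ n, c m = d m)
    (hc : AdmissibleAt A A' c n) : AdmissibleAt A A' d n := by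
  intro t ht htn
  rw [← hcd t.1 (by omega), ← hcd t.2.1 (by omega), ← hcd t.2.2 (by omega)]
  exact hc t ht htn

lemma exists_admissibleAt_extend [Nonempty γ] (hA : MaxDegenerate A)
    (hδ : ∀ a b : γ,
      (∃ c, (a, b, c) ∈ A') ∧ (∃ c, (a, c, b) ∈ A') ∧ (∃ c, (c, a, b) ∈ A'))
    (g : ℕ → γ) (n : ℕ) :
    ∃ x, AdmissibleAt A A' (fun m => if m < n then g m else x) n := by
  by_cases hn : ∃ t ∈ A, max t.1 (max t.2.1 t.2.2) = n
  · obtain ⟨t, ht, htn⟩ := hn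
    have hunique : ∀ s ∈ A, max s.1 (max s.2.1 s.2.2) = n → s = t := fun s hs hsn =>
      by_contra fun hst => hA.2 s hs t ht hst (hsn.trans htn.symm)
    suffices ∃ x, AdmissibleAt {t} A' (fun m => if m < n then g m else x) n by
      obtain ⟨x, hx⟩ := this
      exact ⟨x, fun s hs hsn => hx s (hunique s hs hsn) hsn⟩
    simp only [AdmissibleAt, Set.mem_singleton_iff, forall_eq, htn, forall_const]
    rcases hA.1 t ht with hmax | hmax | hmax
    · obtain ⟨x, hx⟩ := (hδ (g t.2.1) (g t.2.2)).2.2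
      exact ⟨x, by
        simpa [show t.2.1 < n by omega, show t.2.2 < n by omega, show t.1 = n by omega]⟩
    · obtain ⟨x, hx⟩ := (hδ (g t.1) (g t.2.2)).2.1
      exact ⟨x, by
        simpa [show t.1 < n by omega, show t.2.2 < n by omega, show t.2.1 = n by omega]⟩
    · obtain ⟨x, hx⟩ := (hδ (g t.1) (g t.2.1)).1
      exact ⟨x, by
        simpa [show t.1 < n by omega, show t.2.1 < n by omega, show t.2.2 = n by omega]⟩
  · exact ⟨Classical.arbitrary γ, fun t ht htn => absurd ⟨t, ht, htn⟩ hn⟩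

variable (A A') [Nonempty γ]

noncomputable def greedyColoring : ℕ → γ
  | n => Classical.epsilon fun x =>
      AdmissibleAt A A' (fun m => if m < n then greedyColoring m else x) n

variable {A A'}

lemma admissibleAt_greedyColoring (hA : MaxDegenerate A)
    (hδ : ∀ a b : γ,
      (∃ c, (a, b, c) ∈ A') ∧ (∃ c, (a, c, b) ∈ A') ∧ (∃ c, (c, a, b) ∈ A'))
    (n : ℕ) : AdmissibleAt A A' (greedyColoring A A') n := by
  have hn := Classical.epsilon_spec (exists_admissibleAt_extend hA hδ (greedyColoring A A') n)
  rw [← greedyColoring] at hn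
  refine admissibleAt_congr (fun m hm => ?_) hn
  rcases hm.lt_or_eq with hm | rfl <;> simp [*]

theorem exists_coloring (hA : MaxDegenerate A)
    (hδ : ∀ a b : γ,
      (∃ c, (a, b, c) ∈ A') ∧ (∃ c, (a, c, b) ∈ A') ∧ (∃ c, (c, a, b) ∈ A')) :
    ∃ c : ℕ → γ, ∀ t ∈ A, (c t.1, c t.2.1, c t.2.2) ∈ A' :=
  ⟨greedyColoring A A', fun t ht => admissibleAt_greedyColoring hA hδ _ t ht rfl⟩

end MaxDegenerate

theorem stmt19_general {V γ : Type*} [DecidableEq V] [Nonempty γ]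
    (E : Set (Finset V))
    (h : ∃ (f : V → ℕ) (φ : V → V → ℕ), Function.Injective f ∧
      (∀ u v, φ u v = φ v u) ∧
      MaxDegenerate {t | ∃ u v w : V, ({u, v, w} : Finset V) ∈ E ∧
        f u < f v ∧ f v < f w ∧ t = (φ u v, φ u w, φ v w)})
    (A' : Set (γ × γ × γ))
    (hδ : ∀ a b : γ, (∃ c, (a, b, c) ∈ A') ∧ (∃ c, (a, c, b) ∈ A') ∧
      (∃ c, (c, a, b) ∈ A')) :
    Admits E A' := by
  obtain ⟨f, φ, hf, hφ, hA⟩ := h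
  obtain ⟨c, hc⟩ := hA.exists_coloring hδ
  refine ⟨f, fun u v => c (φ u v), hf, fun u v => congrArg c (hφ u v), ?_⟩
  intro u v w huvw huv hvw
  exact hc _ ⟨u, v, w, huvw, huv, hvw, rfl⟩

/-- A 3-graph with a max-layered structure admits every palette with positive
minimum codegree (for all `a, b` each of the three codegree sets is nonempty). -/
theorem stmt19 {V γ : Type*} [DecidableEq V] [Fintype V] [Nonempty γ]
    (E : Set (Finset V))
    (h : ∃ (f : V → ℕ) (φ : V → V → ℕ), Function.Injective f ∧
      (∀ u v, φ u v = φ v u) ∧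
      MaxDegenerate {t | ∃ u v w : V, ({u, v, w} : Finset V) ∈ E ∧
        f u < f v ∧ f v < f w ∧ t = (φ u v, φ u w, φ v w)})
    (A' : Set (γ × γ × γ))
    (hδ : ∀ a b : γ, (∃ c, (a, b, c) ∈ A') ∧ (∃ c, (a, c, b) ∈ A') ∧
      (∃ c, (c, a, b) ∈ A')) :
    Admits E A' :=
  stmt19_general E h A' hδ
end
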